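/- Let T be a genus g triangulation. At any step of the traversal algorithm ComputeSchnyderAnyGenus(T) strictly before termination, there exists an update-candidate — a free boundary corner, a split edge, or a merge edge — incident to the boundary face of C containing the edge {v_0, v_1}. Consequently, the procedure ComputeSchnyderAnyGenus(T) terminates. -/
import Mathlib


set_option linter.unusedSectionVars false

/- ----------------------------------------------------------------
   A formalization of (topological) maps on closed orientable
   surfaces via combinatorial maps: a finite set of brins
   (half-edges/darts), a permutation `next` giving the clockwise
   order of the brins around their origin vertex, and a fixed-point
   free involution `opp` exchanging the two brins of each edge.
   Vertices are the orbits of `next`, edges the orbits of `opp`,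
   faces the orbits of the facial-walk permutation
   `facePerm = opp ∘ next` (the follower of a brin, then its
   opposite).
   ---------------------------------------------------------------- -/

structure CombMap (D : Type) [Fintype D] [DecidableEq D] where
  next : Equiv.Perm D
  opp  : Equiv.Perm D
  opp_invol : ∀ d, opp (opp d) = d
  opp_ne : ∀ d, opp d ≠ d

namespace CombMap

variable {D : Type} [Fintype D] [DecidableEq D]

/-- the facial-walk permutation: `b_{i+1}` is the opposite of the follower of `b_i` -/
def facePerm (M : CombMap D) : Equiv.Perm D := M.next.trans M.opp

/-- forward orbit of a dart under a function -/
def forb (f : D → D) (d : D) : Set D := {h | ∃ n : ℕ, f^[n] d = h}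

/-- number of orbits of `f` met by the (f-invariant) set `s` -/
noncomputable def numOrbitsIn (f : D → D) (s : Set D) : ℕ :=
  ((fun d => forb f d) '' s).ncard

noncomputable def numVertices (M : CombMap D) : ℕ := numOrbitsIn (⇑M.next) Set.univ
noncomputable def numEdges (M : CombMap D) : ℕ := numOrbitsIn (⇑M.opp) Set.univ
noncomputable def numFaces (M : CombMap D) : ℕ := numOrbitsIn (⇑M.facePerm) Set.univ

noncomputable def eulerChar (M : CombMap D) : ℤ :=
  (numVertices M : ℤ) - (numEdges M : ℤ) + (numFaces M : ℤ)

/-- the genus `g` of the surface on which `M` is embedded: Euler's relation `2 - 2g = |V|-|E|+|F|` -/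
def HasGenus (M : CombMap D) (g : ℕ) : Prop := M.eulerChar = 2 - 2 * (g : ℤ)

def Connected (M : CombMap D) : Prop :=
  ∀ d d' : D, Relation.ReflTransGen (fun a b => b = M.next a ∨ b = M.opp a) d d'

/-- the two darts have the same origin vertex -/
def sameVertex (M : CombMap D) (d d' : D) : Prop := d' ∈ forb (⇑M.next) d

def NoLoops (M : CombMap D) : Prop := ∀ d, ¬ M.sameVertex d (M.opp d)

def NoMultipleEdges (M : CombMap D) : Prop :=
  ∀ d d', M.sameVertex d d' → M.sameVertex (M.opp d) (M.opp d') → d' = d ∨ d' = M.opp d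

/-- a triangulation of genus `g`: a connected simple map, all of whose faces have degree 3 -/
structure IsTriang (M : CombMap D) (g : ℕ) : Prop where
  conn : M.Connected
  noLoops : M.NoLoops
  noMult : M.NoMultipleEdges
  deg3 : ∀ d, (⇑M.facePerm)^[3] d = d ∧ M.facePerm d ≠ d
  genus : M.HasGenus g

/- root face: marked by a dart `r`; the root face is the facial orbit of `r`,
   and the root vertices are `v_i = origin of facePerm^[i] r`, `i = 0,1,2`. -/

def rootDarts (M : CombMap D) (r : D) : Set D := forb (⇑M.facePerm) r

/-- the dart belongs to an edge of the root face (an "outer" edge) -/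
def RootEdgeDart (M : CombMap D) (r : D) (h : D) : Prop :=
  h ∈ rootDarts M r ∨ M.opp h ∈ rootDarts M r

/-- the dart belongs to an inner edge -/
def InnerDart (M : CombMap D) (r : D) (h : D) : Prop := ¬ RootEdgeDart M r h

/-- a dart whose origin is the root vertex `v_i` -/
def vDart (M : CombMap D) (r : D) (i : ℕ) : D := (⇑M.facePerm)^[i] r

/-- `v` (as a dart) is an inner vertex, i.e. not a vertex of the root face -/
def InnerVertex (M : CombMap D) (r : D) (v : D) : Prop :=
  ∀ h ∈ rootDarts M r, ¬ M.sameVertex h v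

/- ------------------- subcomplexes ------------------- -/

/-- A subcomplex `C = (V',E',F')` of `M`, encoded by the sets of darts of its
vertices, edges and faces: `Vs` is `next`-closed (a union of vertex orbits),
`Es` is `opp`-closed, `Fs` is `facePerm`-closed, the edges of any chosen face
belong to `C`, and the endpoints of any chosen edge belong to `C`. -/
structure Subcomplex (M : CombMap D) where
  Vs : Set D
  Es : Set D
  Fs : Set D
  vs_closed : ∀ d ∈ Vs, M.next d ∈ Vs
  es_closed : ∀ d ∈ Es, M.opp d ∈ Es
  fs_closed : ∀ d ∈ Fs, M.facePerm d ∈ Fs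
  face_edges : ∀ d ∈ Fs, d ∈ Es
  edge_verts : ∀ d ∈ Es, d ∈ Vs

noncomputable def Subcomplex.eulerChar {M : CombMap D} (C : Subcomplex M) : ℤ :=
  (numOrbitsIn (⇑M.next) C.Vs : ℤ) - (numOrbitsIn (⇑M.opp) C.Es : ℤ)
    + (numOrbitsIn (⇑M.facePerm) C.Fs : ℤ)

/-- first-return time (≥ 1) of the iteration of `f` into `s` -/
noncomputable def returnSteps (f : Equiv.Perm D) (s : Set D) (d : D) : ℕ :=
  sInf {k | 0 < k ∧ (⇑f)^[k] d ∈ s}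

/-- first-return map of `f` into `s`: the follower of `d` within `s` -/
noncomputable def firstReturn (f : Equiv.Perm D) (s : Set D) (d : D) : D :=
  (⇑f)^[returnSteps f s d] d

/-- in the map induced on a set `E2` of darts (rotations given by first return of `next`),
the facial-walk successor: follower within `E2`, then opposite -/
noncomputable def gwalk (M : CombMap D) (E2 : Set D) (d : D) : D :=
  M.opp (firstReturn M.next E2 d)

/-- number of facial walks of the subgraph spanned by the darts `E2` -/
noncomputable def graphFaces (M : CombMap D) (E2 : Set D) : ℕ :=
  numOrbitsIn (gwalk M E2) E2

def graphFaceOrbits (M : CombMap D) (E2 : Set D) : Set (Set D) :=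
  {s | ∃ d ∈ E2, s = forb (gwalk M E2) d}

/-- the facial-walk successor on the boundary of a subcomplex -/
noncomputable def Subcomplex.bwalk {M : CombMap D} (C : Subcomplex M) : D → D :=
  gwalk M C.Es

/-- a boundary brin: a brin of `C` lying on a facial walk of `C` which does not
bound a face of `C` (for `Fs` a union of full face orbits these are the brins
of `Es \ Fs`); it is identified with the boundary corner it starts -/
def Subcomplex.BoundaryBrin {M : CombMap D} (C : Subcomplex M) (d : D) : Prop :=
  d ∈ C.Es ∧ d ∉ C.Fs

/-- number of boundary faces of `C` (one disk attached to each boundary walk) -/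
noncomputable def Subcomplex.numBoundaryFaces {M : CombMap D} (C : Subcomplex M) : ℕ :=
  numOrbitsIn C.bwalk (C.Es \ C.Fs)

/-- Euler characteristic of the map associated with `C` (disks attached) -/
noncomputable def Subcomplex.assocEulerChar {M : CombMap D} (C : Subcomplex M) : ℤ :=
  C.eulerChar + (C.numBoundaryFaces : ℤ)

/-- the map associated with `C` has genus `g'` -/
def Subcomplex.assocHasGenus {M : CombMap D} (C : Subcomplex M) (g' : ℤ) : Prop :=
  C.assocEulerChar = 2 - 2 * g'

/-- the exterior brins incident to the boundary corner at the boundary brin `d`: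
the brins of `M \ C` strictly between `d` and its follower within `C`,
in cw order around the origin of `d` -/
def Subcomplex.cornerExterior {M : CombMap D} (C : Subcomplex M) (d : D) : Set D :=
  {g | ∃ j, 0 < j ∧ j < returnSteps M.next C.Es d ∧ g = (⇑M.next)^[j] d}

/-- a chordal edge: an edge of `M \ C` whose two brins are exterior brins
of boundary corners of `C` -/
def Subcomplex.Chordal {M : CombMap D} (C : Subcomplex M) (h : D) : Prop :=
  h ∉ C.Es ∧ M.opp h ∉ C.Es ∧
  (∃ d, C.BoundaryBrin d ∧ h ∈ C.cornerExterior d) ∧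
  (∃ d, C.BoundaryBrin d ∧ M.opp h ∈ C.cornerExterior d)

/-- a free boundary corner: no exterior edge of the corner is chordal -/
def Subcomplex.FreeCorner {M : CombMap D} (C : Subcomplex M) (d : D) : Prop :=
  C.BoundaryBrin d ∧ ∀ g ∈ C.cornerExterior d, ¬ C.Chordal g

/-- connectivity (through vertices and edges of `C`, avoiding the edges of `A`) -/
def Subcomplex.reachAvoiding {M : CombMap D} (C : Subcomplex M) (A : Set D) (a b : D) : Prop :=
  Relation.ReflTransGen (fun x y =>
    (x ∈ C.Vs ∧ y ∈ C.Vs ∧ M.sameVertex x y) ∨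
    (x ∈ C.Es ∧ x ∉ A ∧ M.opp x ∉ A ∧ y = M.opp x)) a b

def Subcomplex.Conn {M : CombMap D} (C : Subcomplex M) : Prop :=
  ∀ a ∈ C.Vs, ∀ b ∈ C.Vs, C.reachAvoiding ∅ a b

/-- a bridge: an edge whose removal disconnects the subcomplex -/
def Subcomplex.Bridge {M : CombMap D} (C : Subcomplex M) (h : D) : Prop :=
  h ∈ C.Es ∧ ¬ (∀ a ∈ C.Vs, ∀ b ∈ C.Vs, C.reachAvoiding {h, M.opp h} a b)

/-- two boundary corners lie on the same boundary walk (boundary face) of `C` -/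
def Subcomplex.SameBoundaryFace {M : CombMap D} (C : Subcomplex M) (a b : D) : Prop :=
  b ∈ forb C.bwalk a ∨ a ∈ forb C.bwalk b

/- ------------------- duality ------------------- -/

/-- the dual map: same darts, vertices of the dual are the faces of `M`
(rotation given by the facial walks), and `opp` unchanged. Under this
encoding the dual brin `h*` of a brin `h` is `h` itself. -/
def dual (M : CombMap D) : CombMap D where
  next := M.facePerm
  opp := M.opp
  opp_invol := M.opp_invol
  opp_ne := M.opp_ne

lemma perm_inv_mem (f : Equiv.Perm D) (s : Set D)
    (hs : ∀ d ∈ s, f d ∈ s) : ∀ d ∈ s, f.symm d ∈ s := by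
  have hiter : ∀ n : ℕ, ∀ d ∈ s, (⇑f)^[n] d ∈ s := by
    intro n
    induction n with
    | zero => intro d hd; simpa using hd
    | succ n ih => intro d hd; rw [Function.iterate_succ_apply]; exact ih _ (hs d hd)
  intro d hd
  have hpos : 0 < orderOf f := orderOf_pos f
  have hfix : (⇑f)^[orderOf f] d = d := by
    rw [← Equiv.Perm.coe_pow, pow_orderOf_eq_one]; rfl
  have h2 : (⇑f)^[orderOf f] d = f ((⇑f)^[orderOf f - 1] d) := by
    conv_lhs => rw [← Nat.sub_add_cancel hpos]
    rw [Function.iterate_succ_apply']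
  have hkey : f.symm d = (⇑f)^[orderOf f - 1] d := by
    apply f.injective
    rw [Equiv.apply_symm_apply, ← h2, hfix]
  rw [hkey]
  exact hiter _ d hd

lemma dual_facePerm (M : CombMap D) (d : D) : (dual M).facePerm d = M.next d := by
  simp [dual, facePerm, Equiv.trans_apply, M.opp_invol]

/-- the complementary dual of a subcomplex `C` of `M`: the subcomplex of the dual
map formed by the vertices dual to unchosen faces, edges dual to unchosen edges,
and faces dual to unchosen vertices -/
def Subcomplex.compDual {M : CombMap D} (C : Subcomplex M) : Subcomplex (dual M) where
  Vs := C.Fsᶜ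
  Es := C.Esᶜ
  Fs := C.Vsᶜ
  vs_closed := by
    intro d hd hmem
    have hmem' : M.facePerm d ∈ C.Fs := hmem
    exact hd (by
      have := perm_inv_mem M.facePerm C.Fs C.fs_closed _ hmem'
      simpa using this)
  es_closed := by
    intro d hd hmem
    have hmem' : M.opp d ∈ C.Es := hmem
    exact hd (by
      have := perm_inv_mem M.opp C.Es C.es_closed _ hmem'
      simpa using this)
  fs_closed := by
    intro d hd hmem
    rw [dual_facePerm] at hmem
    exact hd (by
      have := perm_inv_mem M.next C.Vs C.vs_closed _ hmem
      simpa using this)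
  face_edges := by
    intro d hd hmem
    exact hd (C.edge_verts _ hmem)
  edge_verts := by
    intro d hd hmem
    exact hd (C.face_edges _ hmem)

/- ------------------- complete boundary walks ------------------- -/

open Classical in
/-- the successor along the complete list of brins of a boundary walk
(boundary brins interleaved with the exterior brins of each boundary corner) -/
noncomputable def cwalk (M : CombMap D) (E2 : Set D) (h : D) : D :=
  if M.next h ∈ E2 then M.opp (M.next h) else M.next h

noncomputable def Subcomplex.completeWalk {M : CombMap D} (C : Subcomplex M) : D → D :=
  cwalk M C.Es

/-- brins appearing on some complete boundary walk of `C` -/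
def Subcomplex.walkSupport {M : CombMap D} (C : Subcomplex M) : Set D :=
  {h | ∃ d, C.BoundaryBrin d ∧ h ∈ forb C.completeWalk d}

/-- the complete boundary walks of `C`, as sets of brins -/
def Subcomplex.boundaryOrbits {M : CombMap D} (C : Subcomplex M) : Set (Set D) :=
  {s | ∃ d, C.BoundaryBrin d ∧ s = forb C.completeWalk d}

noncomputable def Subcomplex.walkPeriod {M : CombMap D} (C : Subcomplex M) (d : D) : ℕ :=
  sInf {n | 0 < n ∧ (C.completeWalk)^[n] d = d}

open Classical in
/-- the dual brin map of Lemma `boundary`: `φ(h) = h*` if `h ∈ C`,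
`φ(h) = opposite(h*)` otherwise (recall `h* = h` in our encoding of the dual) -/
noncomputable def dphi (M : CombMap D) (C : Subcomplex M) (h : D) : D :=
  if h ∈ C.Es then h else M.opp h

/-- same edge (as darts) -/
def SameEdgeDart (M : CombMap D) (a b : D) : Prop := b = a ∨ b = M.opp a

/- ------------------- the traversal operations ------------------- -/

/-- the darts of the faces of `M \ C` incident to the boundary corner at `d`,
together with all darts on these faces -/
def Subcomplex.cornerFaceDarts {M : CombMap D} (C : Subcomplex M) (d : D) : Set D :=
  {g | ∃ j, j < returnSteps M.next C.Es d ∧ g ∈ forb (⇑M.facePerm) ((⇑M.next)^[j] d)}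

/-- the operation `conquer(b)` at a free boundary corner `b = d`: add to `C` all
exterior faces incident to `b`, together with their edges and vertices -/
def IsConquer {M : CombMap D} (C : Subcomplex M) (d : D) (C' : Subcomplex M) : Prop :=
  C.FreeCorner d ∧
  C'.Fs = C.Fs ∪ C.cornerFaceDarts d ∧
  C'.Es = C.Es ∪ C.cornerFaceDarts d ∪ (⇑M.opp) '' C.cornerFaceDarts d ∧
  C'.Vs = C.Vs ∪ {g | ∃ h ∈ C'.Es, g ∈ forb (⇑M.next) h}

/-- adding a (split or merge) chordal edge `h` to `C` -/
def IsAddEdge {M : CombMap D} (C : Subcomplex M) (h : D) (C' : Subcomplex M) : Prop :=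
  C'.Fs = C.Fs ∧ C'.Es = C.Es ∪ {h, M.opp h} ∧ C'.Vs = C.Vs

/-- a split edge: a non-separating chordal edge (its dual is not a bridge of the
complementary dual) whose two brins are incident to boundary corners lying in
the same boundary face of `C` -/
def Subcomplex.SplitEdge {M : CombMap D} (C : Subcomplex M) (h : D) : Prop :=
  C.Chordal h ∧ ¬ C.compDual.Bridge h ∧
  ∀ d d', C.BoundaryBrin d → h ∈ C.cornerExterior d →
    C.BoundaryBrin d' → M.opp h ∈ C.cornerExterior d' → C.SameBoundaryFace d d'

/-- a merge edge: a chordal edge whose two brins are incident to boundary corners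
lying in distinct boundary faces of `C` -/
def Subcomplex.MergeEdge {M : CombMap D} (C : Subcomplex M) (h : D) : Prop :=
  C.Chordal h ∧
  ∃ d d', C.BoundaryBrin d ∧ h ∈ C.cornerExterior d ∧
    C.BoundaryBrin d' ∧ M.opp h ∈ C.cornerExterior d' ∧ ¬ C.SameBoundaryFace d d'

/-- the initial subcomplex: the root face together with its edges and vertices -/
def IsRootComplex (M : CombMap D) (r : D) (C : Subcomplex M) : Prop :=
  C.Fs = rootDarts M r ∧
  C.Es = rootDarts M r ∪ (⇑M.opp) '' rootDarts M r ∧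
  C.Vs = {g | ∃ h ∈ C.Es, g ∈ forb (⇑M.next) h}

def IsFull {M : CombMap D} (C : Subcomplex M) : Prop :=
  C.Fs = Set.univ ∧ C.Es = Set.univ ∧ C.Vs = Set.univ

/-- one (uncolored) step of the traversal: a conquest, a split, or a merge -/
def PlainStep (M : CombMap D) (C C' : Subcomplex M) : Prop :=
  (∃ d, IsConquer C d C') ∨ (∃ h, (C.SplitEdge h ∨ C.MergeEdge h) ∧ IsAddEdge C h C')

/-- a subcomplex reachable from the root face by traversal steps -/
def ExecReach (M : CombMap D) (r : D) (C : Subcomplex M) : Prop :=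
  ∃ C0, IsRootComplex M r C0 ∧ Relation.ReflTransGen (PlainStep M) C0 C

/- ------------------- the colorient rule ------------------- -/

/-- the `colorient` rule at the free boundary corner `d` (with `d'` the follower
of `d` within `C`): the edge of `d` is oriented out of the corner vertex with
color 1, the edge of `d'` is oriented outward with color 0, and all exterior
edges of the corner are oriented toward the corner vertex with color 2 (on
non-special inner edges the opposite dart records the same edge seen from the
other endpoint; each dart of a special edge records its own copy). -/
def ColorientEq (M : CombMap D) (r : D) (C : Subcomplex M) (d : D)
    (dir : D → Bool) (col : D → Fin 3) (special : Set D) : Prop :=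
  (InnerDart M r d → dir d = true ∧ col d = 1 ∧
      (d ∉ special → dir (M.opp d) = false ∧ col (M.opp d) = 1)) ∧
  (InnerDart M r (firstReturn M.next C.Es d) →
      dir (firstReturn M.next C.Es d) = true ∧ col (firstReturn M.next C.Es d) = 0 ∧
      (firstReturn M.next C.Es d ∉ special →
        dir (M.opp (firstReturn M.next C.Es d)) = false ∧
        col (M.opp (firstReturn M.next C.Es d)) = 0)) ∧
  (∀ j, 0 < j → j < returnSteps M.next C.Es d → InnerDart M r ((⇑M.next)^[j] d) →
      dir ((⇑M.next)^[j] d) = false ∧ col ((⇑M.next)^[j] d) = 2 ∧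
      dir (M.opp ((⇑M.next)^[j] d)) = true ∧ col (M.opp ((⇑M.next)^[j] d)) = 2)

/-- one step of `ComputeSchnyderAnyGenus`, recording colors and orientations -/
def GStep (M : CombMap D) (r : D) (C C' : Subcomplex M)
    (dir : D → Bool) (col : D → Fin 3) (special : Set D) : Prop :=
  (∃ d, IsConquer C d C' ∧ ColorientEq M r C d dir col special) ∨
  (∃ h ∈ special, (C.SplitEdge h ∨ C.MergeEdge h) ∧ IsAddEdge C h C')

/-- a complete execution of the traversal algorithm `ComputeSchnyderAnyGenus`
on `M` with root face at `r`, producing the orientation `dir`, the coloring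
`col` and the set `special` of darts of the (split/merge) special edges -/
structure GExec (M : CombMap D) (r : D)
    (dir : D → Bool) (col : D → Fin 3) (special : Set D) where
  N : ℕ
  Cs : ℕ → Subcomplex M
  init : IsRootComplex M r (Cs 0)
  final : IsFull (Cs N)
  step : ∀ k < N, GStep M r (Cs k) (Cs (k + 1)) dir col special
  special_opp : ∀ h ∈ special, M.opp h ∈ special
  special_added : ∀ h ∈ special, ∃ k < N, ∃ h',
      ((Cs k).SplitEdge h' ∨ (Cs k).MergeEdge h') ∧ IsAddEdge (Cs k) h' (Cs (k + 1)) ∧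
      (h = h' ∨ h = M.opp h')

/-- an execution of the planar traversal algorithm (conquests only) -/
structure PlanarExec (M : CombMap D) (r : D) (dir : D → Bool) (col : D → Fin 3) where
  N : ℕ
  Cs : ℕ → Subcomplex M
  init : IsRootComplex M r (Cs 0)
  final : IsFull (Cs N)
  step : ∀ k < N, ∃ d, IsConquer (Cs k) d (Cs (k + 1)) ∧
      ColorientEq M r (Cs k) d dir col ∅

/-- a boundary brin of the edge `{v₀,v₁}` (marking the boundary face `f₀`) -/
def RootBoundaryBrin (M : CombMap D) (r : D) (C : Subcomplex M) (d0 : D) : Prop :=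
  C.BoundaryBrin d0 ∧ M.sameVertex (vDart M r 0) d0 ∧ M.sameVertex (vDart M r 1) (M.opp d0)

/-- the implementation of the traversal that always chooses an update-candidate
incident to the boundary face containing `{v₀,v₁}` and gives priority to free
boundary corners over split and merge edges -/
def PriorityRun {M : CombMap D} (r : D) {dir : D → Bool} {col : D → Fin 3}
    {special : Set D} (E : GExec M r dir col special) : Prop :=
  ∀ k < E.N,
    (∀ d, IsConquer (E.Cs k) d (E.Cs (k + 1)) →
        ∃ d0, RootBoundaryBrin M r (E.Cs k) d0 ∧ (E.Cs k).SameBoundaryFace d0 d) ∧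
    (∀ h, ((E.Cs k).SplitEdge h ∨ (E.Cs k).MergeEdge h) →
        IsAddEdge (E.Cs k) h (E.Cs (k + 1)) →
        (¬ ∃ d d0, RootBoundaryBrin M r (E.Cs k) d0 ∧ (E.Cs k).FreeCorner d ∧
            (E.Cs k).SameBoundaryFace d0 d) ∧
        (∃ d d0, RootBoundaryBrin M r (E.Cs k) d0 ∧ (E.Cs k).BoundaryBrin d ∧
            (E.Cs k).SameBoundaryFace d0 d ∧
            (h ∈ (E.Cs k).cornerExterior d ∨ M.opp h ∈ (E.Cs k).cornerExterior d)))

/- ------------------- Schnyder woods ------------------- -/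

/-- the word pattern `Seq(In 1), Out 0, Seq(In 2), Out 1, Seq(In 0)` on values
`(outgoing?, color)` read in ccw order -/
def SchnyderPattern (l : List (Bool × Fin 3)) : Prop :=
  ∃ a b c : ℕ, l = List.replicate a ((false : Bool), (1 : Fin 3)) ++
    [((true : Bool), (0 : Fin 3))] ++ List.replicate b ((false : Bool), (2 : Fin 3)) ++
    [((true : Bool), (1 : Fin 3))] ++ List.replicate c ((false : Bool), (0 : Fin 3))

noncomputable def vdeg (M : CombMap D) (v : D) : ℕ := (forb (⇑M.next) v).ncard

/-- the ccw successor around the origin vertex -/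
noncomputable def ccwSucc (M : CombMap D) : D → D := ⇑M.next.symm

/-- the darts strictly after `s` in ccw order around its origin, one full turn -/
noncomputable def ccwTail (M : CombMap D) (s : D) : List D :=
  (List.range (vdeg M s - 1)).map fun i => (ccwSucc M)^[i + 1] s

open Classical in
/-- the darts of the sector starting right after the delimiter `s` (in ccw order),
up to the next delimiter -/
noncomputable def sectorDarts (M : CombMap D) (P : D → Prop) (s : D) : List D :=
  (ccwTail M s).takeWhile fun g => decide (¬ P g)

noncomputable def nextDelim (M : CombMap D) (P : D → Prop) (s : D) : D :=
  (ccwSucc M)^[(sectorDarts M P s).length + 1] s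

open Classical in
/-- the sequence of values `(outgoing?, color)` of the inner edges of the sector
that follows the delimiter `s` in ccw order around the origin of `s`.  A special
edge is doubled into two copies enclosing a special face: the copy recorded on the
dart `g` itself appears at the end of the sector preceding the special face of `g`,
and the copy recorded on `M.opp g` (seen from the origin of `g`, hence with
direction flipped) appears at the beginning of the sector following it.  When
`excl2 = true` (local condition at an inner vertex), a copy which is the outgoing
edge of color 2 is excluded from its sector. -/
noncomputable def sectorVals (M : CombMap D) (r : D) (special : Set D)
    (dir : D → Bool) (col : D → Fin 3) (P : D → Prop) (excl2 : Bool) (s : D) :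
    List (Bool × Fin 3) :=
  (if s ∈ special ∧ ¬ (excl2 = true ∧ (!(dir (M.opp s)), col (M.opp s)) =
      ((true : Bool), (2 : Fin 3)))
    then [((!(dir (M.opp s))), col (M.opp s))] else []) ++
  ((sectorDarts M P s).filter fun g => decide (InnerDart M r g)).map
      (fun g => (dir g, col g)) ++
  (if nextDelim M P s ∈ special ∧ ¬ (excl2 = true ∧
      (dir (nextDelim M P s), col (nextDelim M P s)) = ((true : Bool), (2 : Fin 3)))
    then [(dir (nextDelim M P s), col (nextDelim M P s))] else [])

/-- delimiters around an inner vertex: the special darts and the outgoing dart of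
color 2 -/
def innerDelim (special : Set D) (dir : D → Bool) (col : D → Fin 3) (g : D) : Prop :=
  g ∈ special ∨ (dir g = true ∧ col g = 2)

/-- delimiters around the root vertex `v_i`: the special darts and the root-face
corner (at the root dart `vDart M r i`) -/
def rootDelim (M : CombMap D) (r : D) (special : Set D) (i : ℕ) (g : D) : Prop :=
  g ∈ special ∨ g = vDart M r i

/-- local condition at an inner vertex `v`: exactly one outgoing edge (occurrence)
of color 2, and every sector (maximal interval avoiding the special faces and this
edge) reads `Seq(In 1), Out 0, Seq(In 2), Out 1, Seq(In 0)` in ccw order -/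
def LocalVertexCond (M : CombMap D) (r : D) (special : Set D)
    (dir : D → Bool) (col : D → Fin 3) (v : D) : Prop :=
  (∃! gc : D × Bool, M.sameVertex v gc.1 ∧
      cond gc.2 (gc.1 ∈ special ∧ dir (M.opp gc.1) = false ∧ col (M.opp gc.1) = 2)
        (dir gc.1 = true ∧ col gc.1 = 2)) ∧
  ∀ s, M.sameVertex v s → innerDelim special dir col s →
    SchnyderPattern (sectorVals M r special dir col (innerDelim special dir col) true s)

/-- root-face condition at `v_i` (`i = 0` or `1`): all inner edges of the root
sector are ingoing of color `i`, and every other sector reads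
`Seq(In 1), Out 0, Seq(In 2), Out 1, Seq(In 0)` in ccw order -/
def RootVertexCond (M : CombMap D) (r : D) (special : Set D)
    (dir : D → Bool) (col : D → Fin 3) (i : Fin 3) : Prop :=
  (∀ p ∈ sectorVals M r special dir col (rootDelim M r special (i : ℕ)) false
      (vDart M r (i : ℕ)), p = ((false : Bool), i)) ∧
  (∀ s, M.sameVertex (vDart M r (i : ℕ)) s → s ∈ special →
      SchnyderPattern (sectorVals M r special dir col
        (rootDelim M r special (i : ℕ)) false s))

/-- a cut-graph: a spanning cellular subgraph with a unique face, i.e. a connected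
spanning subgraph whose complement on the surface is a single open disk -/
def IsCutGraph (M : CombMap D) (gT : ℕ) (E2 : Set D) : Prop :=
  (∀ h ∈ E2, M.opp h ∈ E2) ∧
  (∀ v : D, ∃ h ∈ E2, M.sameVertex v h) ∧
  (∀ a ∈ E2, ∀ b ∈ E2, Relation.ReflTransGen
      (fun x y => x ∈ E2 ∧ y ∈ E2 ∧ (M.sameVertex x y ∨ y = M.opp x)) a b) ∧
  graphFaces M E2 = 1 ∧
  ((M.numVertices : ℤ) - (numOrbitsIn (⇑M.opp) E2 : ℤ)) + 1 = 2 - 2 * (gT : ℤ)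

/-- the darts of the cut-graph `G₂`: the (non-special) edges of color 2, the two
root edges `{v₀,v₂}` and `{v₁,v₂}`, and the special edges (not doubled) -/
def G2darts (M : CombMap D) (r : D) (special : Set D) (col : D → Fin 3) : Set D :=
  {h | InnerDart M r h ∧ h ∉ special ∧ col h = 2} ∪ special ∪
  {h | RootEdgeDart M r h ∧ (M.sameVertex (vDart M r 2) h ∨
      M.sameVertex (vDart M r 2) (M.opp h))}

/-- the edges of color 2 form a tree spanning all vertices except `v₀` and `v₁`,
rooted at `v₂` with all edges directed toward `v₂` -/
def Tree2Cond (M : CombMap D) (r : D) (special : Set D)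
    (dir : D → Bool) (col : D → Fin 3) : Prop :=
  (∀ h, InnerDart M r h → h ∉ special → col h = 2 →
      ¬ M.sameVertex (vDart M r 0) h ∧ ¬ M.sameVertex (vDart M r 1) h) ∧
  (∀ v : D, ¬ M.sameVertex (vDart M r 0) v → ¬ M.sameVertex (vDart M r 1) v →
      ¬ M.sameVertex (vDart M r 2) v →
      ∃! h, M.sameVertex v h ∧ InnerDart M r h ∧ h ∉ special ∧ col h = 2 ∧
        dir h = true) ∧
  (∀ h, M.sameVertex (vDart M r 2) h →
      ¬ (InnerDart M r h ∧ h ∉ special ∧ col h = 2 ∧ dir h = true)) ∧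
  (∀ v : D, ¬ M.sameVertex (vDart M r 0) v → ¬ M.sameVertex (vDart M r 1) v →
      Relation.ReflTransGen (fun a b => ∃ h, M.sameVertex a h ∧ InnerDart M r h ∧
          h ∉ special ∧ col h = 2 ∧ dir h = true ∧ M.sameVertex b (M.opp h))
        v (vDart M r 2))

/-- a `g`-Schnyder wood of a genus-`gT` triangulation with root face at `r`:
the inner edges are partitioned into normal edges and special edges (set of
darts `special`, each special edge carrying two independently directed and
colored copies, recorded on its two darts), every edge is directed and colored
in `{0,1,2}`, subject to the root-face condition, the local condition for inner
vertices and the cut-graph condition -/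
structure IsGSchnyderWood (M : CombMap D) (r : D) (gT : ℕ)
    (special : Set D) (dir : D → Bool) (col : D → Fin 3) : Prop where
  special_opp : ∀ h ∈ special, M.opp h ∈ special
  special_inner : ∀ h ∈ special, InnerDart M r h
  consistent : ∀ h, InnerDart M r h → h ∉ special →
      dir (M.opp h) = !dir h ∧ col (M.opp h) = col h
  v2_nospecial : ∀ g, M.sameVertex (vDart M r 2) g → g ∉ special
  v2_in2 : ∀ g, M.sameVertex (vDart M r 2) g → InnerDart M r g →
      dir g = false ∧ col g = 2
  root0 : RootVertexCond M r special dir col 0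
  root1 : RootVertexCond M r special dir col 1
  local_inner : ∀ v, InnerVertex M r v → LocalVertexCond M r special dir col v
  tree2 : Tree2Cond M r special dir col
  cut : IsCutGraph M gT (G2darts M r special col)

/-- a Schnyder wood of a plane triangulation (Definition of Schnyder): an
orientation and coloring of the inner edges such that all inner edges incident
to `v_i` are ingoing of color `i`, and around each inner vertex the edges read,
in ccw order: `Out 2, Seq(In 1), Out 0, Seq(In 2), Out 1, Seq(In 0)` -/
structure IsPlanarSchnyderWood (M : CombMap D) (r : D)
    (dir : D → Bool) (col : D → Fin 3) : Prop where
  consistent : ∀ h, InnerDart M r h → dir (M.opp h) = !dir h ∧ col (M.opp h) = col h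
  root_cond : ∀ i : Fin 3, ∀ g, M.sameVertex (vDart M r (i : ℕ)) g →
      InnerDart M r g → dir g = false ∧ col g = i
  local_cond : ∀ v, InnerVertex M r v → LocalVertexCond M r ∅ dir col v

end CombMap

/- STATEMENT 9: At any step of the traversal algorithm
ComputeSchnyderAnyGenus(T) strictly before termination, there exists an
update-candidate (a free boundary corner, a split edge or a merge edge)
incident to the boundary face of C containing the edge {v_0, v_1}.
Consequently, the procedure terminates (there is no infinite run). -/


/- ===================== auxiliary development ===================== -/
open CombMap

namespace SchnyderAux

variable {D : Type} [Fintype D] [DecidableEq D]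

lemma exists_return {f : D → D} (hf : Function.Injective f) (d : D) :
    ∃ n, 0 < n ∧ f^[n] d = d := by
  have hb : Function.Bijective f := (Finite.injective_iff_bijective).1 hf
  let e : Equiv.Perm D := Equiv.ofBijective f hb
  have hcoe : ⇑e = f := rfl
  refine ⟨orderOf e, orderOf_pos e, ?_⟩
  rw [← hcoe, ← Equiv.Perm.coe_pow, pow_orderOf_eq_one]; rfl

lemma returnSteps_spec (f : Equiv.Perm D) (s : Set D) {d : D} (hd : d ∈ s) :
    0 < returnSteps f s d ∧ (⇑f)^[returnSteps f s d] d ∈ s := by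
  have hne : {k | 0 < k ∧ (⇑f)^[k] d ∈ s}.Nonempty := by
    obtain ⟨n, hn, he⟩ := exists_return f.injective d
    exact ⟨n, hn, by rw [he]; exact hd⟩
  exact Nat.sInf_mem hne

lemma mem_cornerFaceDarts_self {M : CombMap D} (C : Subcomplex M) {d : D}
    (hd : d ∈ C.Es) : d ∈ C.cornerFaceDarts d := by
  refine ⟨0, (returnSteps_spec M.next C.Es hd).1, ⟨0, rfl⟩⟩

lemma conquer_lt {M : CombMap D} {C C' : Subcomplex M} {d : D}
    (h : IsConquer C d C') :
    C.Fs.ncard + C.Es.ncard < C'.Fs.ncard + C'.Es.ncard := by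
  obtain ⟨hfree, hFs, hEs, _⟩ := h
  have hdE : d ∈ C.Es := hfree.1.1
  have hdF : d ∉ C.Fs := hfree.1.2
  have h1 : C.Fs ⊂ C'.Fs := by
    rw [hFs]
    refine ⟨Set.subset_union_left, fun hsub => hdF (hsub (Or.inr (mem_cornerFaceDarts_self C hdE)))⟩
  have h2 : C.Es ⊆ C'.Es := by rw [hEs]; exact (Set.subset_union_left).trans Set.subset_union_left
  have := Set.ncard_lt_ncard h1 (Set.toFinite _)
  have := Set.ncard_le_ncard h2 (Set.toFinite _)
  omega

lemma addEdge_lt {M : CombMap D} {C C' : Subcomplex M} {h : D}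
    (hch : C.Chordal h) (ha : IsAddEdge C h C') :
    C.Fs.ncard + C.Es.ncard < C'.Fs.ncard + C'.Es.ncard := by
  obtain ⟨hFs, hEs, _⟩ := ha
  have h2 : C.Es ⊂ C'.Es := by
    rw [hEs]
    refine ⟨Set.subset_union_left, fun hsub => hch.1 (hsub (Or.inr (Or.inl rfl)))⟩
  have := Set.ncard_lt_ncard h2 (Set.toFinite _)
  rw [hFs]
  omega

lemma plainStep_lt {M : CombMap D} {C C' : Subcomplex M} (h : PlainStep M C C') :
    C.Fs.ncard + C.Es.ncard < C'.Fs.ncard + C'.Es.ncard := by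
  rcases h with ⟨d, hc⟩ | ⟨e, he, ha⟩
  · exact conquer_lt hc
  · exact addEdge_lt (by rcases he with h | h; exact h.1; exact h.1) ha

lemma no_infinite_run (M : CombMap D) (r : D) :
    ¬ ∃ f : ℕ → Subcomplex M, IsRootComplex M r (f 0) ∧
        ∀ k : ℕ, PlainStep M (f k) (f (k + 1)) := by
  rintro ⟨f, -, hstep⟩
  have hmono : ∀ k, (f 0).Fs.ncard + (f 0).Es.ncard + k ≤ (f k).Fs.ncard + (f k).Es.ncard := by
    intro k
    induction k with
    | zero => omega
    | succ n ih => have := plainStep_lt (hstep n); omega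
  have hbd : ∀ k, (f k).Fs.ncard + (f k).Es.ncard ≤ 2 * Fintype.card D := by
    intro k
    have h1 : (f k).Fs.ncard ≤ Fintype.card D := by
      have := Set.ncard_le_ncard (Set.subset_univ (f k).Fs) (Set.toFinite (Set.univ : Set D))
      simpa [Set.ncard_univ] using this
    have h2 : (f k).Es.ncard ≤ Fintype.card D := by
      have := Set.ncard_le_ncard (Set.subset_univ (f k).Es) (Set.toFinite (Set.univ : Set D))
      simpa [Set.ncard_univ] using this
    omega
  have := hmono (2 * Fintype.card D + 1)
  have := hbd (2 * Fintype.card D + 1)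
  omega


/- ---------- Layer 1 : orbits ---------- -/

lemma mem_forb (f : D → D) (d : D) (n : ℕ) : f^[n] d ∈ forb f d := ⟨n, rfl⟩

lemma forb_self (f : D → D) (d : D) : d ∈ forb f d := ⟨0, rfl⟩

lemma forb_trans {f : D → D} {a b c : D} (h1 : b ∈ forb f a) (h2 : c ∈ forb f b) :
    c ∈ forb f a := by
  obtain ⟨m, hm⟩ := h1; obtain ⟨n, hn⟩ := h2
  exact ⟨n + m, by rw [Function.iterate_add_apply, hm, hn]⟩

lemma iterate_return_mul {f : D → D} {d : D} {m : ℕ} (h : f^[m] d = d) :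
    ∀ k, f^[k * m] d = d := by
  intro k
  induction k with
  | zero => simp
  | succ n ih =>
      rw [Nat.succ_mul, Function.iterate_add_apply, h, ih]

lemma iterate_cancel {f : D → D} (hf : Function.Injective f) {x : D} {a b : ℕ}
    (hab : a ≤ b) (h : f^[a] x = f^[b] x) : f^[b - a] x = x := by
  apply Function.Injective.iterate hf a
  rw [← Function.iterate_add_apply, Nat.add_sub_cancel' hab]
  exact h.symm

lemma forb_symm {f : D → D} (hf : Function.Injective f) {a b : D} (h : b ∈ forb f a) :
    a ∈ forb f b := by
  obtain ⟨n, hn⟩ := h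
  obtain ⟨m, hm, hmr⟩ := exists_return hf a
  have hnm : n ≤ n * m := Nat.le_mul_of_pos_right n hm
  refine ⟨n * m - n, ?_⟩
  rw [← hn, ← Function.iterate_add_apply, Nat.sub_add_cancel hnm]
  exact iterate_return_mul hmr n

lemma forb_eq {f : D → D} (hf : Function.Injective f) {a b : D} (h : b ∈ forb f a) :
    forb f a = forb f b := by
  ext c
  exact ⟨fun hc => forb_trans (forb_symm hf h) hc, fun hc => forb_trans h hc⟩

/-- the least positive return time of an injective map to a point of its orbit -/
lemma least_hit {f : D → D} {x y : D} (hne : ∃ n, 0 < n ∧ f^[n] x = y) :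
    ∃ t, 0 < t ∧ f^[t] x = y ∧ ∀ i, 0 < i → i < t → f^[i] x ≠ y := by
  classical
  let s : Set ℕ := {n | 0 < n ∧ f^[n] x = y}
  have hs : s.Nonempty := hne
  obtain ⟨h1, h2⟩ := Nat.sInf_mem hs
  exact ⟨sInf s, h1, h2, fun i hi1 hi2 hiy => Nat.notMem_of_lt_sInf hi2 ⟨hi1, hiy⟩⟩

/- ---------- Layer 2 : map basics ---------- -/

lemma facePerm_apply (M : CombMap D) (d : D) : M.facePerm d = M.opp (M.next d) := rfl

lemma opp_opp (M : CombMap D) (d : D) : M.opp (M.opp d) = d := M.opp_invol d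

lemma sameVertex_def (M : CombMap D) (a b : D) :
    M.sameVertex a b ↔ b ∈ forb (⇑M.next) a := Iff.rfl

lemma sameVertex_refl (M : CombMap D) (a : D) : M.sameVertex a a := forb_self _ _

lemma sameVertex_symm {M : CombMap D} {a b : D} (h : M.sameVertex a b) :
    M.sameVertex b a := forb_symm M.next.injective h

lemma sameVertex_trans {M : CombMap D} {a b c : D} (h1 : M.sameVertex a b)
    (h2 : M.sameVertex b c) : M.sameVertex a c := forb_trans h1 h2

lemma sameVertex_iter (M : CombMap D) (a : D) (n : ℕ) :
    M.sameVertex a ((⇑M.next)^[n] a) := mem_forb _ _ _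

/- ---------- Layer 3 : subcomplex basics ---------- -/

variable {M : CombMap D}

lemma es_opp_iff (C : Subcomplex M) (d : D) : M.opp d ∈ C.Es ↔ d ∈ C.Es := by
  constructor
  · intro h; have := C.es_closed _ h; rwa [opp_opp] at this
  · exact C.es_closed d

lemma fs_sub_es (C : Subcomplex M) {d : D} (h : d ∈ C.Fs) : d ∈ C.Es := C.face_edges d h

lemma fs_iter (C : Subcomplex M) {d : D} (h : d ∈ C.Fs) (n : ℕ) :
    (⇑M.facePerm)^[n] d ∈ C.Fs := by
  induction n with
  | zero => exact h
  | succ n ih => rw [Function.iterate_succ_apply']; exact C.fs_closed _ ih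

lemma fs_inv (C : Subcomplex M) {d : D} (h : M.facePerm d ∈ C.Fs) : d ∈ C.Fs := by
  have := perm_inv_mem M.facePerm C.Fs C.fs_closed _ h
  simpa using this

/-- notation-lightening defs -/
noncomputable def rs (C : Subcomplex M) (d : D) : ℕ := returnSteps M.next C.Es d

lemma rs_pos (C : Subcomplex M) {d : D} (hd : d ∈ C.Es) : 0 < rs C d :=
  (returnSteps_spec M.next C.Es hd).1

lemma rs_mem (C : Subcomplex M) {d : D} (hd : d ∈ C.Es) :
    (⇑M.next)^[rs C d] d ∈ C.Es := (returnSteps_spec M.next C.Es hd).2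

lemma rs_min (C : Subcomplex M) {d : D} (j : ℕ) (h1 : 0 < j) (h2 : j < rs C d) :
    (⇑M.next)^[j] d ∉ C.Es := by
  intro hmem
  exact Nat.notMem_of_lt_sInf h2 ⟨h1, hmem⟩

lemma mem_cornerExterior_iff (C : Subcomplex M) (d g : D) :
    g ∈ C.cornerExterior d ↔ ∃ j, 0 < j ∧ j < rs C d ∧ g = (⇑M.next)^[j] d := Iff.rfl

lemma cornerExterior_not_es (C : Subcomplex M) {d g : D} (h : g ∈ C.cornerExterior d) :
    g ∉ C.Es := by
  obtain ⟨j, hj1, hj2, rfl⟩ := h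
  exact rs_min C j hj1 hj2

lemma cornerExterior_sameVertex (C : Subcomplex M) {d g : D} (h : g ∈ C.cornerExterior d) :
    M.sameVertex d g := by
  obtain ⟨j, _, _, rfl⟩ := h
  exact sameVertex_iter M d j

lemma rs_eq_one_of_fs (C : Subcomplex M) {d : D} (hd : d ∈ C.Fs) : rs C d = 1 := by
  have h1 : M.next d ∈ C.Es := by
    have : M.facePerm d ∈ C.Fs := C.fs_closed d hd
    have h2 : M.opp (M.next d) ∈ C.Es := fs_sub_es C this
    rwa [es_opp_iff] at h2
  have hle : rs C d ≤ 1 := Nat.sInf_le ⟨Nat.one_pos, by simpa using h1⟩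
  have := rs_pos C (fs_sub_es C hd)
  omega

lemma bwalk_eq (C : Subcomplex M) (d : D) :
    C.bwalk d = M.opp ((⇑M.next)^[rs C d] d) := rfl

lemma boundaryBrin_bwalk (C : Subcomplex M) {d : D} (hd : C.BoundaryBrin d) :
    C.BoundaryBrin (C.bwalk d) := by
  obtain ⟨hdE, hdF⟩ := hd
  constructor
  · rw [bwalk_eq, es_opp_iff]; exact rs_mem C hdE
  · rw [bwalk_eq]
    intro hmem
    have hpos := rs_pos C hdE
    have hkey : M.facePerm ((⇑M.next)^[rs C d - 1] d) = M.opp ((⇑M.next)^[rs C d] d) := by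
      rw [facePerm_apply]
      conv_rhs => rw [show rs C d = (rs C d - 1) + 1 by omega, Function.iterate_succ_apply']
    rw [← hkey] at hmem
    have h3 : (⇑M.next)^[rs C d - 1] d ∈ C.Fs := fs_inv C hmem
    rcases Nat.lt_or_ge 1 (rs C d) with hgt | hle
    · exact rs_min C (rs C d - 1) (by omega) (by omega) (fs_sub_es C h3)
    · have : rs C d = 1 := by omega
      rw [this] at h3
      simp at h3
      exact hdF h3

/- ---------- Layer 4 : the complete walk ---------- -/

lemma cwalk_injective (C : Subcomplex M) : Function.Injective (cwalk M C.Es) := by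
  intro x y hxy
  unfold cwalk at hxy
  by_cases hx : M.next x ∈ C.Es <;> by_cases hy : M.next y ∈ C.Es <;>
    simp only [if_pos, if_neg, hx, hy, if_true, if_false] at hxy
  · exact M.next.injective (M.opp.injective hxy)
  · exact absurd (hxy ▸ ((es_opp_iff C (M.next x)).2 hx)) hy
  · exact absurd (hxy.symm ▸ ((es_opp_iff C (M.next y)).2 hy)) hx
  · exact M.next.injective hxy

lemma cwalk_corner_step (C : Subcomplex M) {d : D} (hd : d ∈ C.Es) {j : ℕ}
    (hj : j < rs C d) :
    cwalk M C.Es ((⇑M.next)^[j] d) =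
      if j + 1 = rs C d then C.bwalk d else (⇑M.next)^[j + 1] d := by
  have hnext : M.next ((⇑M.next)^[j] d) = (⇑M.next)^[j + 1] d :=
    (Function.iterate_succ_apply' (⇑M.next) j d).symm
  unfold cwalk
  rw [hnext]
  by_cases hcase : j + 1 = rs C d
  · rw [if_pos hcase, if_pos (by rw [hcase]; exact rs_mem C hd), bwalk_eq, hcase]
  · rw [if_neg hcase, if_neg (rs_min C (j + 1) (by omega) (by omega))]

lemma cwalk_iter_ext (C : Subcomplex M) {d : D} (hd : d ∈ C.Es) {j : ℕ}
    (hj : j < rs C d) : (cwalk M C.Es)^[j] d = (⇑M.next)^[j] d := by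
  induction j with
  | zero => rfl
  | succ n ih =>
      rw [Function.iterate_succ_apply', ih (by omega),
        cwalk_corner_step C hd (by omega), if_neg (by omega)]

lemma cwalk_rs (C : Subcomplex M) {d : D} (hd : d ∈ C.Es) :
    (cwalk M C.Es)^[rs C d] d = C.bwalk d := by
  have hpos := rs_pos C hd
  rw [show rs C d = (rs C d - 1) + 1 by omega, Function.iterate_succ_apply',
    cwalk_iter_ext C hd (by omega), cwalk_corner_step C hd (by omega),
    if_pos (by omega)]

/-- classification of darts on a complete boundary walk -/
def OnWalk (C : Subcomplex M) (x : D) : Prop :=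
  ∃ c j, C.BoundaryBrin c ∧ j < rs C c ∧ x = (⇑M.next)^[j] c

lemma onWalk_of_boundary (C : Subcomplex M) {d : D} (hd : C.BoundaryBrin d) :
    OnWalk C d := ⟨d, 0, hd, rs_pos C hd.1, rfl⟩

lemma onWalk_cwalk (C : Subcomplex M) {x : D} (h : OnWalk C x) :
    OnWalk C (cwalk M C.Es x) := by
  obtain ⟨c, j, hc, hj, rfl⟩ := h
  rw [cwalk_corner_step C hc.1 hj]
  by_cases hcase : j + 1 = rs C c
  · rw [if_pos hcase]
    exact onWalk_of_boundary C (boundaryBrin_bwalk C hc)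
  · rw [if_neg hcase]
    exact ⟨c, j + 1, hc, by omega, rfl⟩

lemma onWalk_cwalk_iter (C : Subcomplex M) {x : D} (h : OnWalk C x) (n : ℕ) :
    OnWalk C ((cwalk M C.Es)^[n] x) := by
  induction n with
  | zero => exact h
  | succ n ih => rw [Function.iterate_succ_apply']; exact onWalk_cwalk C ih

lemma onWalk_not_fs (C : Subcomplex M) {x : D} (h : OnWalk C x) : x ∉ C.Fs := by
  obtain ⟨c, j, hc, hj, rfl⟩ := h
  rcases Nat.eq_zero_or_pos j with hj0 | hj0
  · subst hj0; exact hc.2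
  · intro hmem; exact rs_min C j hj0 hj (fs_sub_es C hmem)

lemma onWalk_es (C : Subcomplex M) {x : D} (h : OnWalk C x) (hx : x ∈ C.Es) :
    C.BoundaryBrin x := by
  obtain ⟨c, j, hc, hj, rfl⟩ := h
  rcases Nat.eq_zero_or_pos j with hj0 | hj0
  · subst hj0; exact hc
  · exact absurd hx (rs_min C j hj0 hj)

/- ---------- Layer 5 : corners ---------- -/

lemma corner_unique_aux (C : Subcomplex M) {d d' : D} (hd : d ∈ C.Es) (hd' : d' ∈ C.Es)
    {j j' : ℕ} (hj1 : 0 < j) (hj2 : j < rs C d) (hj1' : 0 < j') (hj2' : j' < rs C d')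
    (heq : (⇑M.next)^[j] d = (⇑M.next)^[j'] d') (hle : j' ≤ j) : d = d' ∧ j = j' := by
  have hinj : Function.Injective (⇑M.next) := M.next.injective
  have hd'eq : d' = (⇑M.next)^[j - j'] d := by
    apply Function.Injective.iterate hinj j'
    rw [← heq, ← Function.iterate_add_apply]
    congr 1
    omega
  rcases Nat.eq_zero_or_pos (j - j') with h0 | h0
  · have hjj : j = j' := by omega
    refine ⟨?_, hjj⟩
    rw [hd'eq, h0]
    rfl
  · exfalso
    exact rs_min C (j - j') h0 (by omega) (hd'eq ▸ hd')

lemma corner_unique (C : Subcomplex M) {d d' h : D} (hd : d ∈ C.Es) (hd' : d' ∈ C.Es)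
    (h1 : h ∈ C.cornerExterior d) (h2 : h ∈ C.cornerExterior d') : d = d' := by
  obtain ⟨j, hj1, hj2, rfl⟩ := h1
  obtain ⟨j', hj1', hj2', heq⟩ := h2
  rcases le_total j' j with hle | hle
  · exact (corner_unique_aux C hd hd' hj1 hj2 hj1' hj2' heq hle).1
  · exact ((corner_unique_aux C hd' hd hj1' hj2' hj1 hj2 heq.symm hle).1).symm

lemma exterior_mem_corner (C : Subcomplex M) {x e : D} (he : e ∈ C.Es)
    (hx : M.sameVertex e x) (hxE : x ∉ C.Es) :
    ∃ d, C.BoundaryBrin d ∧ x ∈ C.cornerExterior d := by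
  classical
  obtain ⟨n, hn⟩ := hx
  have hn0 : 0 < n := by
    rcases Nat.eq_zero_or_pos n with h0 | h0
    · exfalso; apply hxE; rw [← hn, h0]; exact he
    · exact h0
  set P : ℕ → Prop := fun k => (⇑M.next)^[k] e ∈ C.Es with hP
  set k₀ := Nat.findGreatest P (n - 1) with hk₀
  have hPk₀ : P k₀ := Nat.findGreatest_spec (Nat.zero_le _) (by simpa [hP] using he)
  have hk₀le : k₀ ≤ n - 1 := Nat.findGreatest_le _
  have hgr : ∀ k, k₀ < k → k ≤ n - 1 → ¬ P k := fun k h1 h2 =>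
    Nat.findGreatest_is_greatest h1 h2
  set d := (⇑M.next)^[k₀] e with hd
  have hdE : d ∈ C.Es := hPk₀
  have hnot : ∀ i, 0 < i → i ≤ n - k₀ → (⇑M.next)^[i] d ∉ C.Es := by
    intro i hi1 hi2
    have heq : (⇑M.next)^[i] d = (⇑M.next)^[k₀ + i] e := by
      rw [hd, ← Function.iterate_add_apply]
      congr 1
      omega
    rcases Nat.lt_or_ge (k₀ + i) n with hlt | hge
    · rw [heq]; exact hgr (k₀ + i) (by omega) (by omega)
    · have : k₀ + i = n := by omega
      rw [heq, this, hn]; exact hxE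
  have hrs : n - k₀ < rs C d := by
    by_contra hcon
    push_neg at hcon
    exact hnot _ (rs_pos C hdE) hcon (rs_mem C hdE)
  have hrs1 : 1 < rs C d := by omega
  refine ⟨d, ⟨hdE, fun hF => by have := rs_eq_one_of_fs C hF; omega⟩,
    ⟨n - k₀, by omega, hrs, ?_⟩⟩
  rw [hd, ← Function.iterate_add_apply, ← hn]
  congr 1
  omega

/- ---------- Layer 6 : reachability in the complementary dual ---------- -/

lemma compDual_vs_iff (C : Subcomplex M) (x : D) : x ∈ C.compDual.Vs ↔ x ∉ C.Fs :=
  Iff.rfl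

lemma compDual_es_iff (C : Subcomplex M) (x : D) : x ∈ C.compDual.Es ↔ x ∉ C.Es :=
  Iff.rfl

lemma dual_sameVertex_iff (x y : D) :
    (dual M).sameVertex x y ↔ y ∈ forb (⇑M.facePerm) x := Iff.rfl

lemma dual_opp_eq : (dual M).opp = M.opp := rfl

lemma dstep_face (C : Subcomplex M) {A : Set D} {x y : D} (hx : x ∉ C.Fs)
    (hy : y ∉ C.Fs) (hxy : y ∈ forb (⇑M.facePerm) x) :
    C.compDual.reachAvoiding A x y :=
  Relation.ReflTransGen.single (Or.inl ⟨hx, hy, hxy⟩)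

lemma dstep_cross (C : Subcomplex M) {A : Set D} {x : D} (hx : x ∉ C.Es)
    (h1 : x ∉ A) (h2 : M.opp x ∉ A) :
    C.compDual.reachAvoiding A x (M.opp x) :=
  Relation.ReflTransGen.single (Or.inr ⟨hx, h1, h2, rfl⟩)

lemma dreach_trans (C : Subcomplex M) {A : Set D} {a b c : D}
    (h1 : C.compDual.reachAvoiding A a b) (h2 : C.compDual.reachAvoiding A b c) :
    C.compDual.reachAvoiding A a c := Relation.ReflTransGen.trans h1 h2

lemma dstep_symm (C : Subcomplex M) (A : Set D) (x y : D)
    (hr : (x ∈ C.compDual.Vs ∧ y ∈ C.compDual.Vs ∧ (dual M).sameVertex x y) ∨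
      (x ∈ C.compDual.Es ∧ x ∉ A ∧ (dual M).opp x ∉ A ∧ y = (dual M).opp x)) :
    (y ∈ C.compDual.Vs ∧ x ∈ C.compDual.Vs ∧ (dual M).sameVertex y x) ∨
      (y ∈ C.compDual.Es ∧ y ∉ A ∧ (dual M).opp y ∉ A ∧ x = (dual M).opp y) := by
  rcases hr with ⟨h1, h2, h3⟩ | ⟨h1, h2, h3, h4⟩
  · exact Or.inl ⟨h2, h1, forb_symm M.facePerm.injective h3⟩
  · subst h4
    refine Or.inr ⟨?_, h3, ?_, ?_⟩
    · intro hmem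
      exact h1 ((es_opp_iff C x).1 hmem)
    · show M.opp (M.opp x) ∉ A
      rw [opp_opp]; exact h2
    · show x = M.opp (M.opp x)
      rw [opp_opp]

lemma dreach_symm (C : Subcomplex M) {A : Set D} {a b : D}
    (h : C.compDual.reachAvoiding A a b) : C.compDual.reachAvoiding A b a := by
  refine Relation.ReflTransGen.head_induction_on h Relation.ReflTransGen.refl ?_
  intro x c h' _ ih
  exact Relation.ReflTransGen.tail ih (dstep_symm C A x c h')

lemma dreach_mono (C : Subcomplex M) {A B : Set D} (hBA : B ⊆ A) {a b : D}
    (h : C.compDual.reachAvoiding A a b) : C.compDual.reachAvoiding B a b := by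
  induction h with
  | refl => exact Relation.ReflTransGen.refl
  | tail hab hbc ih =>
      refine Relation.ReflTransGen.tail ih ?_
      rcases hbc with ⟨h1, h2, h3⟩ | ⟨h1, h2, h3, h4⟩
      · exact Or.inl ⟨h1, h2, h3⟩
      · exact Or.inr ⟨h1, fun hm => h2 (hBA hm), fun hm => h3 (hBA hm), h4⟩

lemma dstep_detour (C : Subcomplex M) {h : D}
    (hdet : C.compDual.reachAvoiding {h, M.opp h} h (M.opp h)) (x y : D)
    (hr : (x ∈ C.compDual.Vs ∧ y ∈ C.compDual.Vs ∧ (dual M).sameVertex x y) ∨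
      (x ∈ C.compDual.Es ∧ x ∉ (∅ : Set D) ∧ (dual M).opp x ∉ (∅ : Set D) ∧
        y = (dual M).opp x)) :
    C.compDual.reachAvoiding {h, M.opp h} x y := by
  rcases hr with ⟨h1, h2, h3⟩ | ⟨h1, h2, h3, h4⟩
  · exact dstep_face C h1 h2 h3
  · have h4' : y = M.opp x := h4
    subst h4'
    by_cases hy1 : x = h
    · subst hy1; exact hdet
    · by_cases hy2 : x = M.opp h
      · subst hy2
        rw [opp_opp]
        exact dreach_symm C hdet
      · refine dstep_cross C h1 ?_ ?_
        · intro hm; rcases hm with hm | hm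
          · exact hy1 hm
          · exact hy2 hm
        · intro hm; rcases hm with hm | hm
          · apply hy2; rw [← hm, opp_opp]
          · exact hy1 (M.opp.injective hm)

lemma dreach_detour (C : Subcomplex M) {h : D}
    (hdet : C.compDual.reachAvoiding {h, M.opp h} h (M.opp h)) {a b : D}
    (hab : C.compDual.reachAvoiding ∅ a b) :
    C.compDual.reachAvoiding {h, M.opp h} a b := by
  refine Relation.ReflTransGen.head_induction_on hab Relation.ReflTransGen.refl ?_
  intro x c h' _ ih
  exact dreach_trans C (dstep_detour C hdet x c h') ih

/-- chain of faces in the sector of darts following `x` around its origin -/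
lemma sector_chain (C : Subcomplex M) (A : Set D) {x : D} (hx : x ∉ C.Fs) (n : ℕ)
    (hext : ∀ j, 1 ≤ j → j ≤ n → (⇑M.next)^[j] x ∉ C.Es ∧ (⇑M.next)^[j] x ∉ A ∧
      M.opp ((⇑M.next)^[j] x) ∉ A) :
    C.compDual.reachAvoiding A x ((⇑M.next)^[n] x) := by
  induction n with
  | zero => exact Relation.ReflTransGen.refl
  | succ n ih =>
      have hih := ih (fun j hj1 hj2 => hext j hj1 (by omega))
      refine dreach_trans C hih ?_
      have hES : (⇑M.next)^[n + 1] x ∉ C.Es := (hext (n + 1) (by omega) le_rfl).1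
      have hA1 : (⇑M.next)^[n + 1] x ∉ A := (hext (n + 1) (by omega) le_rfl).2.1
      have hA2 : M.opp ((⇑M.next)^[n + 1] x) ∉ A := (hext (n + 1) (by omega) le_rfl).2.2
      have hfs1 : (⇑M.next)^[n] x ∉ C.Fs := by
        rcases Nat.eq_zero_or_pos n with h0 | h0
        · subst h0; exact hx
        · exact fun hm => (hext n h0 (by omega)).1 (fs_sub_es C hm)
      have hopES : M.opp ((⇑M.next)^[n + 1] x) ∉ C.Es :=
        fun hm => hES ((es_opp_iff C _).1 hm)
      have step1 : C.compDual.reachAvoiding A ((⇑M.next)^[n] x)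
          (M.opp ((⇑M.next)^[n + 1] x)) := by
        refine dstep_face C hfs1 (fun hm => hopES (fs_sub_es C hm)) ⟨1, ?_⟩
        simp only [Function.iterate_one]
        rw [facePerm_apply, Function.iterate_succ_apply']
      refine dreach_trans C step1 ?_
      have step2 := dstep_cross C (A := A) hopES hA2 (by rw [opp_opp]; exact hA1)
      rw [opp_opp] at step2
      exact step2

/-- a single step of the complete boundary walk, in the complementary dual -/
lemma walk_chain_step (C : Subcomplex M) (A : Set D) {x : D} (hx : OnWalk C x)
    (hA : cwalk M C.Es x ∉ C.Es → cwalk M C.Es x ∉ A ∧ M.opp (cwalk M C.Es x) ∉ A) :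
    C.compDual.reachAvoiding A x (cwalk M C.Es x) := by
  obtain ⟨c, j, hc, hj, rfl⟩ := hx
  have hfs : (⇑M.next)^[j] c ∉ C.Fs := onWalk_not_fs C ⟨c, j, hc, hj, rfl⟩
  rw [cwalk_corner_step C hc.1 hj] at hA ⊢
  by_cases hcase : j + 1 = rs C c
  · rw [if_pos hcase] at hA ⊢
    refine dstep_face C hfs (boundaryBrin_bwalk C hc).2 ⟨1, ?_⟩
    simp only [Function.iterate_one]
    rw [facePerm_apply, bwalk_eq]
    congr 1
    conv_rhs => rw [← hcase, Function.iterate_succ_apply']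
  · rw [if_neg hcase] at hA ⊢
    have hES : (⇑M.next)^[j + 1] c ∉ C.Es := rs_min C (j + 1) (by omega) (by omega)
    obtain ⟨hA1, hA2⟩ := hA hES
    have hopES : M.opp ((⇑M.next)^[j + 1] c) ∉ C.Es := fun hm => hES ((es_opp_iff C _).1 hm)
    have step1 : C.compDual.reachAvoiding A ((⇑M.next)^[j] c)
        (M.opp ((⇑M.next)^[j + 1] c)) := by
      refine dstep_face C hfs (fun hm => hopES (fs_sub_es C hm)) ⟨1, ?_⟩
      simp only [Function.iterate_one]
      rw [facePerm_apply, Function.iterate_succ_apply']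
    refine dreach_trans C step1 ?_
    have step2 := dstep_cross C (A := A) hopES hA2 (by rw [opp_opp]; exact hA1)
    rw [opp_opp] at step2
    exact step2

lemma walk_chain (C : Subcomplex M) (A : Set D) {x : D} (hx : OnWalk C x) (n : ℕ)
    (hA : ∀ i, 1 ≤ i → i ≤ n → (cwalk M C.Es)^[i] x ∉ A ∧
      M.opp ((cwalk M C.Es)^[i] x) ∉ A) :
    C.compDual.reachAvoiding A x ((cwalk M C.Es)^[n] x) := by
  induction n with
  | zero => exact Relation.ReflTransGen.refl
  | succ n ih =>
      refine dreach_trans C (ih (fun i h1 h2 => hA i h1 (by omega))) ?_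
      rw [Function.iterate_succ_apply']
      exact walk_chain_step C A (onWalk_cwalk_iter C hx n)
        (fun _ => by
          have := hA (n + 1) (by omega) le_rfl
          rwa [Function.iterate_succ_apply'] at this)

lemma hop_face (C : Subcomplex M) (A : Set D) {x : D} (hx : OnWalk C x)
    (hcw : cwalk M C.Es x ∉ C.Es) :
    C.compDual.reachAvoiding A x (M.opp (cwalk M C.Es x)) := by
  have hnx : cwalk M C.Es x = M.next x := by
    unfold cwalk
    by_cases hmem : M.next x ∈ C.Es
    · exfalso; apply hcw; unfold cwalk; rw [if_pos hmem, es_opp_iff]; exact hmem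
    · rw [if_neg hmem]
  refine dstep_face C (onWalk_not_fs C hx) ?_ ⟨1, ?_⟩
  · intro hm
    exact hcw ((es_opp_iff C _).1 (fs_sub_es C hm))
  · simp only [Function.iterate_one]
    rw [facePerm_apply, hnx]

/- ---------- Layer 7 : boundary walks and boundary faces ---------- -/

/-- classification of darts on the complete walk through `d0`, recording that the
corner lies on the `bwalk` orbit of `d0` -/
def OnWalkAt (C : Subcomplex M) (d0 x : D) : Prop :=
  ∃ c j, c ∈ forb C.bwalk d0 ∧ C.BoundaryBrin c ∧ j < rs C c ∧ x = (⇑M.next)^[j] c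

lemma onWalkAt_self (C : Subcomplex M) {d0 : D} (hd0 : C.BoundaryBrin d0) :
    OnWalkAt C d0 d0 := ⟨d0, 0, forb_self _ _, hd0, rs_pos C hd0.1, rfl⟩

lemma onWalkAt_onWalk (C : Subcomplex M) {d0 x : D} (h : OnWalkAt C d0 x) :
    OnWalk C x := by
  obtain ⟨c, j, _, hc, hj, hx⟩ := h
  exact ⟨c, j, hc, hj, hx⟩

lemma onWalkAt_cwalk (C : Subcomplex M) {d0 x : D} (h : OnWalkAt C d0 x) :
    OnWalkAt C d0 (cwalk M C.Es x) := by
  obtain ⟨c, j, hcW, hc, hj, rfl⟩ := h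
  rw [cwalk_corner_step C hc.1 hj]
  by_cases hcase : j + 1 = rs C c
  · rw [if_pos hcase]
    refine ⟨C.bwalk c, 0, forb_trans hcW (mem_forb _ _ 1), boundaryBrin_bwalk C hc,
      rs_pos C (boundaryBrin_bwalk C hc).1, rfl⟩
  · rw [if_neg hcase]
    exact ⟨c, j + 1, hcW, hc, by omega, rfl⟩

lemma onWalkAt_cwalk_iter (C : Subcomplex M) {d0 x : D} (h : OnWalkAt C d0 x) (n : ℕ) :
    OnWalkAt C d0 ((cwalk M C.Es)^[n] x) := by
  induction n with
  | zero => exact h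
  | succ n ih => rw [Function.iterate_succ_apply']; exact onWalkAt_cwalk C ih

lemma mem_W_onWalkAt (C : Subcomplex M) {d0 x : D} (hd0 : C.BoundaryBrin d0)
    (hx : x ∈ forb (cwalk M C.Es) d0) : OnWalkAt C d0 x := by
  obtain ⟨m, rfl⟩ := hx
  exact onWalkAt_cwalk_iter C (onWalkAt_self C hd0) m

lemma mem_W_corner (C : Subcomplex M) {d0 x : D} (hd0 : C.BoundaryBrin d0)
    (hx : x ∈ forb (cwalk M C.Es) d0) (hxE : x ∉ C.Es) :
    ∃ c, C.BoundaryBrin c ∧ c ∈ forb C.bwalk d0 ∧ x ∈ C.cornerExterior c := by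
  obtain ⟨c, j, hcW, hc, hj, rfl⟩ := mem_W_onWalkAt C hd0 hx
  rcases Nat.eq_zero_or_pos j with h0 | h0
  · subst h0; exact absurd hc.1 hxE
  · exact ⟨c, hc, hcW, j, h0, hj, rfl⟩

lemma mem_W_boundary (C : Subcomplex M) {d0 x : D} (hd0 : C.BoundaryBrin d0)
    (hx : x ∈ forb (cwalk M C.Es) d0) (hxE : x ∈ C.Es) : x ∈ forb C.bwalk d0 := by
  obtain ⟨c, j, hcW, hc, hj, rfl⟩ := mem_W_onWalkAt C hd0 hx
  rcases Nat.eq_zero_or_pos j with h0 | h0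
  · subst h0; exact hcW
  · exact absurd hxE (rs_min C j h0 hj)

lemma forb_bwalk_sub_cw (C : Subcomplex M) {a : D} (ha : C.BoundaryBrin a) :
    ∀ x ∈ forb C.bwalk a, x ∈ forb (cwalk M C.Es) a := by
  have key : ∀ m, (C.bwalk)^[m] a ∈ forb (cwalk M C.Es) a ∧
      C.BoundaryBrin ((C.bwalk)^[m] a) := by
    intro m
    induction m with
    | zero => exact ⟨forb_self _ _, ha⟩
    | succ n ih =>
        obtain ⟨h1, h2⟩ := ih
        rw [Function.iterate_succ_apply']
        refine ⟨?_, boundaryBrin_bwalk C h2⟩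
        have : C.bwalk ((C.bwalk)^[n] a) ∈ forb (cwalk M C.Es) ((C.bwalk)^[n] a) := by
          rw [← cwalk_rs C h2.1]
          exact mem_forb _ _ _
        exact forb_trans h1 this
  rintro x ⟨m, rfl⟩
  exact (key m).1

lemma sbf_to_cw (C : Subcomplex M) {a b : D} (ha : C.BoundaryBrin a)
    (hb : C.BoundaryBrin b) (h : C.SameBoundaryFace a b) :
    b ∈ forb (cwalk M C.Es) a := by
  rcases h with h | h
  · exact forb_bwalk_sub_cw C ha b h
  · exact forb_symm (cwalk_injective C) (forb_bwalk_sub_cw C hb a h)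

lemma sbf_of_W (C : Subcomplex M) {d0 c : D} (hd0 : C.BoundaryBrin d0)
    (hc : c ∈ forb (cwalk M C.Es) d0) (hcE : c ∈ C.Es) : C.SameBoundaryFace d0 c :=
  Or.inl (mem_W_boundary C hd0 hc hcE)

lemma chordal_opp (C : Subcomplex M) {h : D} (hch : C.Chordal h) :
    C.Chordal (M.opp h) := by
  obtain ⟨h1, h2, h3, h4⟩ := hch
  exact ⟨h2, by rwa [opp_opp], h4, by rwa [opp_opp]⟩

/-- a least iterate of an injective map reaching `y` within the period -/
lemma pos_lt_period {f : D → D} (hf : Function.Injective f) {x y : D} {n : ℕ}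
    (hn : 0 < n) (hnx : f^[n] x = x) (hy : ∃ m, f^[m] x = y) :
    ∃ m, m < n ∧ f^[m] x = y := by
  classical
  have hne : {m | f^[m] x = y}.Nonempty := hy
  obtain hmem := Nat.sInf_mem hne
  set m₀ := sInf {m | f^[m] x = y} with hm₀
  rcases Nat.lt_or_ge m₀ n with hlt | hge
  · exact ⟨m₀, hlt, hmem⟩
  · exfalso
    have : f^[m₀ - n] x = y := by
      rw [← hmem]
      conv_rhs => rw [show m₀ = (m₀ - n) + n by omega, Function.iterate_add_apply, hnx]
    have hle := Nat.sInf_le (show m₀ - n ∈ {m | f^[m] x = y} from this)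
    omega

lemma pos_inj {f : D → D} (hf : Function.Injective f) {x : D} {n : ℕ}
    (hmin : ∀ i, 0 < i → i < n → f^[i] x ≠ x) {i j : ℕ} (hi : i < n) (hj : j < n)
    (heq : f^[i] x = f^[j] x) : i = j := by
  rcases le_total i j with hle | hle
  · have := iterate_cancel hf hle heq
    by_contra hne
    exact hmin (j - i) (by omega) (by omega) this
  · have := iterate_cancel hf hle heq.symm
    by_contra hne
    exact hmin (i - j) (by omega) (by omega) this

/- ---------- Layer 8 : connectivity of the complementary dual ---------- -/

def DualConn (C : Subcomplex M) : Prop :=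
  ∀ a, a ∉ C.Fs → ∀ b, b ∉ C.Fs → C.compDual.reachAvoiding ∅ a b

lemma not_bridge_of_detour (C : Subcomplex M) (hDC : DualConn C) {h : D}
    (hdet : C.compDual.reachAvoiding {h, M.opp h} h (M.opp h)) :
    ¬ C.compDual.Bridge h := by
  rintro ⟨-, hB⟩
  apply hB
  intro a ha b hb
  exact dreach_detour C hdet (hDC a ha b hb)

lemma ext_mem_cw (C : Subcomplex M) {c x : D} (hcE : c ∈ C.Es)
    (hx : x ∈ C.cornerExterior c) : x ∈ forb (cwalk M C.Es) c := by
  obtain ⟨j, hj1, hj2, rfl⟩ := hx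
  exact ⟨j, by rw [cwalk_iter_ext C hcE hj2]⟩

/-- in the hard case (no split nor merge incident to the boundary face of `d0`),
every chordal edge with a corner on the walk of `d0` has both brins on the walk
and its dual is a bridge, so its two sides cannot be linked avoiding it -/
lemma hard_case_analysis (C : Subcomplex M) (hDC : DualConn C) {d0 : D}
    (hd0 : C.BoundaryBrin d0)
    (hSM : ∀ h, ¬ ((C.SplitEdge h ∨ C.MergeEdge h) ∧ ∃ d, C.BoundaryBrin d ∧
      C.SameBoundaryFace d0 d ∧ (h ∈ C.cornerExterior d ∨ M.opp h ∈ C.cornerExterior d)))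
    {c h : D} (hc : C.BoundaryBrin c) (hcW : c ∈ forb (cwalk M C.Es) d0)
    (hch : C.Chordal h) (hhc : h ∈ C.cornerExterior c) :
    h ∈ forb (cwalk M C.Es) d0 ∧ M.opp h ∈ forb (cwalk M C.Es) d0 ∧
      ¬ C.compDual.reachAvoiding {h, M.opp h} h (M.opp h) := by
  have hwit : ∃ d, C.BoundaryBrin d ∧ C.SameBoundaryFace d0 d ∧
      (h ∈ C.cornerExterior d ∨ M.opp h ∈ C.cornerExterior d) :=
    ⟨c, hc, sbf_of_W C hd0 hcW hc.1, Or.inl hhc⟩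
  have hallSBF : ∀ d d', C.BoundaryBrin d → h ∈ C.cornerExterior d →
      C.BoundaryBrin d' → M.opp h ∈ C.cornerExterior d' → C.SameBoundaryFace d d' := by
    intro d d' h1 h2 h3 h4
    by_contra hn
    exact hSM h ⟨Or.inr ⟨hch, d, d', h1, h2, h3, h4, hn⟩, hwit⟩
  have hBridge : C.compDual.Bridge h := by
    by_contra hn
    exact hSM h ⟨Or.inl ⟨hch, hn, hallSBF⟩, hwit⟩
  refine ⟨forb_trans hcW (ext_mem_cw C hc.1 hhc), ?_, ?_⟩
  · obtain ⟨c₁, hc₁, hopc₁⟩ := hch.2.2.2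
    have hsbf := hallSBF c c₁ hc hhc hc₁ hopc₁
    exact forb_trans (forb_trans hcW (sbf_to_cw C hc hc₁ hsbf))
      (ext_mem_cw C hc₁.1 hopc₁)
  · intro hdet
    exact not_bridge_of_detour C hDC hdet hBridge

/- ---------- Layer 9 : the progress theorem ---------- -/

theorem progress_core (C : Subcomplex M) (hNL : M.NoLoops) (hNM : M.NoMultipleEdges)
    (hDC : DualConn C) {d0 : D} (hd0 : C.BoundaryBrin d0) :
    (∃ d, C.FreeCorner d ∧ C.SameBoundaryFace d0 d) ∨
    (∃ h, (C.SplitEdge h ∨ C.MergeEdge h) ∧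
      ∃ d, C.BoundaryBrin d ∧ C.SameBoundaryFace d0 d ∧
        (h ∈ C.cornerExterior d ∨ M.opp h ∈ C.cornerExterior d)) := by
  classical
  by_contra hcon
  rw [not_or] at hcon
  obtain ⟨hA, hB⟩ := hcon
  have hSM : ∀ h, ¬ ((C.SplitEdge h ∨ C.MergeEdge h) ∧ ∃ d, C.BoundaryBrin d ∧
      C.SameBoundaryFace d0 d ∧ (h ∈ C.cornerExterior d ∨ M.opp h ∈ C.cornerExterior d)) :=
    fun h hx => hB ⟨h, hx⟩
  set cw : D → D := cwalk M C.Es with hcwdef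
  have hcwinj : Function.Injective cw := cwalk_injective C
  set W : Set D := forb cw d0 with hWdef
  -- a non-free corner on the walk has a chordal edge
  have hnotfree : ∀ x, C.BoundaryBrin x → x ∈ W → ∃ g, g ∈ C.cornerExterior x ∧ C.Chordal g := by
    intro x hx hxW
    by_contra hno
    push_neg at hno
    exact hA ⟨x, ⟨hx, fun g hg => hno g hg⟩, sbf_of_W C hd0 hxW hx.1⟩
  -- the minimal chordal-to-partner time on the walk
  set ChW : D → Prop := fun h => C.Chordal h ∧ h ∈ W ∧ M.opp h ∈ W with hChWdef
  have hChW_opp : ∀ h, ChW h → ChW (M.opp h) := by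
    intro h ⟨h1, h2, h3⟩
    exact ⟨chordal_opp C h1, h3, by rwa [opp_opp]⟩
  have hChW_mk : ∀ x h, C.BoundaryBrin x → x ∈ W → C.Chordal h → h ∈ C.cornerExterior x →
      ChW h ∧ ¬ C.compDual.reachAvoiding {h, M.opp h} h (M.opp h) := by
    intro x h hx hxW hch hhx
    obtain ⟨m1, m2, m3⟩ := hard_case_analysis C hDC hd0 hSM hx hxW hch hhx
    exact ⟨⟨hch, m1, m2⟩, m3⟩
  obtain ⟨g₀, hg₀x, hg₀ch⟩ := hnotfree d0 hd0 (forb_self _ _)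
  obtain ⟨hChWg₀, -⟩ := hChW_mk d0 g₀ hd0 (forb_self _ _) hg₀ch hg₀x
  set T : Set ℕ := {t | 0 < t ∧ ∃ h, ChW h ∧ cw^[t] h = M.opp h} with hTdef
  have hTne : T.Nonempty := by
    have h1 : M.opp g₀ ∈ forb cw g₀ := by
      rw [← forb_eq hcwinj hChWg₀.2.1]
      exact hChWg₀.2.2
    obtain ⟨m, hm⟩ := h1
    refine ⟨m, ?_, g₀, hChWg₀, hm⟩
    rcases Nat.eq_zero_or_pos m with h0 | h0
    · exfalso; rw [h0] at hm; exact M.opp_ne g₀ hm.symm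
    · exact h0
  obtain ⟨ht₀pos, h₀, hChW₀, ht₀eq⟩ := Nat.sInf_mem hTne
  set t₀ : ℕ := sInf T with ht₀def
  have hmin : ∀ t, 0 < t → t < t₀ → ∀ h, ChW h → cw^[t] h ≠ M.opp h := by
    intro t h1 h2 h hh heq
    exact Nat.notMem_of_lt_sInf h2 ⟨h1, h, hh, heq⟩
  -- period of the walk cycle of h₀
  obtain ⟨n, hn0, hneq, hnmin⟩ := least_hit (f := cw) (x := h₀) (y := h₀)
    (exists_return hcwinj h₀)
  have ht₀n : t₀ < n := by
    rcases lt_trichotomy t₀ n with h1 | h1 | h1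
    · exact h1
    · exfalso
      rw [← h1] at hneq
      rw [hneq] at ht₀eq
      exact M.opp_ne h₀ ht₀eq.symm
    · exfalso
      have : cw^[t₀ - n] h₀ = M.opp h₀ := by
        rw [← ht₀eq]
        conv_rhs => rw [show t₀ = (t₀ - n) + n by omega, Function.iterate_add_apply, hneq]
      exact hmin (t₀ - n) (by omega) (by omega) h₀ hChW₀ this
  have hAvoid : ∀ i, 0 < i → i < n → i ≠ t₀ → cw^[i] h₀ ≠ h₀ ∧ cw^[i] h₀ ≠ M.opp h₀ := by
    intro i h1 h2 h3
    refine ⟨hnmin i h1 h2, ?_⟩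
    intro heq
    rcases lt_or_gt_of_ne h3 with hlt | hgt
    · exact hmin i h1 hlt h₀ hChW₀ heq
    · have : cw^[(n - i) + t₀] h₀ = h₀ := by
        rw [Function.iterate_add_apply, ht₀eq, ← heq, ← Function.iterate_add_apply]
        rw [show n - i + i = n by omega]
        exact hneq
      exact hnmin ((n - i) + t₀) (by omega) (by omega) this
  have notinA : ∀ z, z ≠ h₀ → z ≠ M.opp h₀ →
      z ∉ ({h₀, M.opp h₀} : Set D) ∧ M.opp z ∉ ({h₀, M.opp h₀} : Set D) := by
    intro z hz1 hz2
    constructor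
    · intro hm; rcases hm with hm | hm
      · exact hz1 hm
      · exact hz2 hm
    · intro hm; rcases hm with hm | hm
      · apply hz2; rw [← hm, opp_opp]
      · exact hz1 (M.opp.injective hm)
  -- the corner of h₀
  have hh₀W : h₀ ∈ W := hChW₀.2.1
  have hh₀nE : h₀ ∉ C.Es := hChW₀.1.1
  have hoph₀nE : M.opp h₀ ∉ C.Es := hChW₀.1.2.1
  obtain ⟨c₀, hc₀, hc₀W, hh₀c₀⟩ := mem_W_corner C hd0 hh₀W hh₀nE
  have hc₀cw : c₀ ∈ W := forb_bwalk_sub_cw C hd0 c₀ hc₀W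
  obtain ⟨-, -, Hdet₀⟩ := hard_case_analysis C hDC hd0 hSM hc₀ hc₀cw hChW₀.1 hh₀c₀
  obtain ⟨j₀, hj₀pos, hj₀lt, hh₀eq⟩ := hh₀c₀
  have hbridge₀ : returnSteps M.next C.Es c₀ = rs C c₀ := rfl
  have hcw0 : cw^[j₀] c₀ = h₀ := by
    rw [hcwdef, cwalk_iter_ext C hc₀.1 hj₀lt]; exact hh₀eq.symm
  have hrel : ∀ i, cw^[i] h₀ = cw^[i + j₀] c₀ := by
    intro i
    rw [Function.iterate_add_apply, hcw0]
  have hOnW : OnWalk C h₀ := onWalkAt_onWalk C (mem_W_onWalkAt C hd0 hh₀W)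
  set u : ℕ := rs C c₀ - j₀ with hudef
  have hu1 : 1 ≤ u := by
    have := hj₀lt; omega
  have hxu : cw^[u] h₀ = C.bwalk c₀ := by
    rw [hrel u, show u + j₀ = rs C c₀ by omega, hcwdef, cwalk_rs C hc₀.1]
  rcases lt_trichotomy u t₀ with hult | hueq | hugt
  swap
  · -- u = t₀ : the partner of h₀ would be a boundary brin
    apply hoph₀nE
    rw [← ht₀eq, ← hueq, hxu]
    exact (boundaryBrin_bwalk C hc₀).1
  swap
  · -- u > t₀ : h₀ would be a loop
    have hext : M.opp h₀ = (⇑M.next)^[t₀] h₀ := by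
      rw [← ht₀eq, hrel t₀, hcwdef, cwalk_iter_ext C hc₀.1 (by omega), hh₀eq,
        ← Function.iterate_add_apply]
    exact hNL h₀ ⟨t₀, hext.symm⟩
  -- main case : u < t₀
  set P : ℕ → Prop := fun i => cw^[i] h₀ ∈ C.Es with hPdef
  have hPu : P u := by rw [hPdef]; simp only; rw [hxu]; exact (boundaryBrin_bwalk C hc₀).1
  set i₂ : ℕ := Nat.findGreatest P (t₀ - 1) with hi₂def
  have hi₂P : P i₂ := Nat.findGreatest_spec (m := u) (by omega) hPu
  have hi₂ge : u ≤ i₂ := Nat.le_findGreatest (by omega) hPu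
  have hi₂le : i₂ ≤ t₀ - 1 := Nat.findGreatest_le _
  have hi₂gr : ∀ k, i₂ < k → k ≤ t₀ - 1 → ¬ P k := fun k h1 h2 =>
    Nat.findGreatest_is_greatest h1 h2
  set cstar : D := cw^[i₂] h₀ with hcstardef
  have hcstarE : cstar ∈ C.Es := hi₂P
  have hcstarW : cstar ∈ W := forb_trans hh₀W (mem_forb _ _ _)
  have hcstarB : C.BoundaryBrin cstar :=
    onWalk_es C (onWalkAt_onWalk C (mem_W_onWalkAt C hd0 hcstarW)) hcstarE
  set v : ℕ := t₀ - i₂ with hvdef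
  have hrelstar : ∀ q, cw^[q] cstar = cw^[q + i₂] h₀ := by
    intro q
    rw [hcstardef, ← Function.iterate_add_apply]
  have hvrs : v < rs C cstar := by
    by_contra hcon2
    push_neg at hcon2
    have hbw : cw^[rs C cstar] cstar ∈ C.Es := by
      rw [hcwdef, cwalk_rs C hcstarE]
      exact (boundaryBrin_bwalk C hcstarB).1
    rw [hrelstar] at hbw
    have hrs1 := rs_pos C hcstarE
    rcases lt_trichotomy (rs C cstar + i₂) t₀ with hc1 | hc1 | hc1
    · exact hi₂gr (rs C cstar + i₂) (by omega) (by omega) hbw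
    · apply hoph₀nE
      rw [← ht₀eq, ← hc1]
      exact hbw
    · omega
  have hbridgestar : returnSteps M.next C.Es cstar = rs C cstar := rfl
  have hopext : M.opp h₀ ∈ C.cornerExterior cstar := by
    refine ⟨v, by omega, by omega, ?_⟩
    rw [← cwalk_iter_ext C hcstarE hvrs, ← hcwdef, hrelstar, show v + i₂ = t₀ by omega, ht₀eq]
  -- uniqueness of the inner boundary brin
  have hSuniq : ∀ i, 0 < i → i < t₀ → cw^[i] h₀ ∈ C.Es → i = i₂ := by
    intro i hi0 hit hiE
    set xi : D := cw^[i] h₀ with hxidef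
    have hxiW : xi ∈ W := forb_trans hh₀W (mem_forb _ _ _)
    have hxiB : C.BoundaryBrin xi :=
      onWalk_es C (onWalkAt_onWalk C (mem_W_onWalkAt C hd0 hxiW)) hiE
    obtain ⟨g, hgext, hgch⟩ := hnotfree xi hxiB hxiW
    obtain ⟨jg, hjg0, hjglt, hgeq⟩ := hgext
    have hbridgei : returnSteps M.next C.Es xi = rs C xi := rfl
    have hrel_i : ∀ q, cw^[q] xi = cw^[q + i] h₀ := by
      intro q
      rw [hxidef, ← Function.iterate_add_apply]
    set p : ℕ := i + jg with hpdef
    have hgpos : cw^[p] h₀ = g := by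
      rw [show p = jg + i by omega, ← hrel_i, hcwdef, cwalk_iter_ext C hiE hjglt]
      exact hgeq.symm
    rcases le_or_gt t₀ p with hge | hlt
    · -- the partner of h₀ lies in the corner of xi : xi = cstar
      have hext2 : M.opp h₀ ∈ C.cornerExterior xi := by
        refine ⟨t₀ - i, by omega, by omega, ?_⟩
        rw [← cwalk_iter_ext C hiE (show t₀ - i < rs C xi by omega), ← hcwdef, hrel_i,
          show t₀ - i + i = t₀ by omega, ht₀eq]
      have hxieq : xi = cstar := corner_unique C hiE hcstarE hext2 hopext
      exact pos_inj hcwinj hnmin (by omega) (by omega) hxieq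
    · -- g is a chordal edge strictly inside the arc
      exfalso
      have hgne : cw^[p] h₀ ≠ h₀ ∧ cw^[p] h₀ ≠ M.opp h₀ :=
        hAvoid p (by omega) (by omega) (by omega)
      rw [hgpos] at hgne
      obtain ⟨hChWg, -⟩ := hChW_mk xi g hxiB hxiW hgch ⟨jg, hjg0, hjglt, hgeq⟩
      have hopg_ex : ∃ m, cw^[m] h₀ = M.opp g := by
        have : M.opp g ∈ forb cw h₀ := by
          rw [← forb_eq hcwinj hh₀W]
          exact hChWg.2.2
        exact this
      obtain ⟨p', hp'n, hp'eq⟩ := pos_lt_period hcwinj hn0 hneq hopg_ex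
      have hp'0 : p' ≠ 0 := by
        intro h0
        rw [h0, Function.iterate_zero_apply] at hp'eq
        exact hgne.2 (by rw [hp'eq, opp_opp])
      have hp't₀ : p' ≠ t₀ := by
        intro h0
        rw [h0, ht₀eq] at hp'eq
        exact hgne.1 (M.opp.injective hp'eq).symm
      have hp'p : p' ≠ p := by
        intro h0
        rw [h0, hgpos] at hp'eq
        exact M.opp_ne g hp'eq.symm
      rcases lt_or_gt_of_ne hp't₀ with hp'lt | hp'gt
      · -- both brins of g strictly inside : contradicts minimality of t₀
        rcases lt_or_gt_of_ne hp'p with hpp | hpp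
        · -- p' < p
          apply hmin (p - p') (by omega) (by omega) (M.opp g) (hChW_opp g hChWg)
          have hx : cw^[p - p'] (M.opp g) = g := by
            rw [← hp'eq, ← Function.iterate_add_apply cw (p - p') p' h₀,
              show p - p' + p' = p by omega, hgpos]
          rw [hx, opp_opp]
        · -- p < p'
          apply hmin (p' - p) (by omega) (by omega) g hChWg
          have hx : cw^[p' - p] g = cw^[p'] h₀ := by
            rw [← hgpos, ← Function.iterate_add_apply cw (p' - p) p h₀,
              show p' - p + p = p' by omega]
          rw [hx, hp'eq]
      · -- g crosses the chord h₀ : contradicts the bridge property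
        apply Hdet₀
        have r1 : C.compDual.reachAvoiding {h₀, M.opp h₀} h₀ g := by
          rw [← hgpos]
          refine walk_chain C _ hOnW p ?_
          intro q h1 h2
          exact notinA _ (hAvoid q (by omega) (by omega) (by omega)).1
            (hAvoid q (by omega) (by omega) (by omega)).2
        have r2 : C.compDual.reachAvoiding {h₀, M.opp h₀} g (M.opp g) :=
          dstep_cross C hgch.1 (notinA g hgne.1 hgne.2).1 (notinA g hgne.1 hgne.2).2
        have hopgOnW : OnWalk C (M.opp g) := by
          rw [← hp'eq]
          exact onWalkAt_onWalk C (onWalkAt_cwalk_iter C (mem_W_onWalkAt C hd0 hh₀W) p')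
        have hrel_p' : ∀ q, cw^[q] (M.opp g) = cw^[q + p'] h₀ := by
          intro q
          rw [← hp'eq, ← Function.iterate_add_apply cw q p' h₀]
        have r3 : C.compDual.reachAvoiding {h₀, M.opp h₀} (M.opp g) (cw^[n - 1 - p'] (M.opp g)) := by
          refine walk_chain C _ hopgOnW (n - 1 - p') ?_
          intro q h1 h2
          rw [hrel_p']
          exact notinA _ (hAvoid (q + p') (by omega) (by omega) (by omega)).1
            (hAvoid (q + p') (by omega) (by omega) (by omega)).2
        have r4 : C.compDual.reachAvoiding {h₀, M.opp h₀} (cw^[n - 1 - p'] (M.opp g)) (M.opp h₀) := by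
          have hyeq : cw^[n - 1 - p'] (M.opp g) = cw^[n - 1] h₀ := by
            rw [hrel_p']
            congr 1
            omega
          have hcwy : cw (cw^[n - 1] h₀) = h₀ := by
            have hstep : cw^[1 + (n - 1)] h₀ = cw (cw^[n - 1] h₀) := by
              rw [Function.iterate_add_apply, Function.iterate_one]
            rw [← hstep, show 1 + (n - 1) = n by omega, hneq]
          have := hop_face C ({h₀, M.opp h₀} : Set D)
            (x := cw^[n - 1] h₀)
            (onWalkAt_onWalk C (onWalkAt_cwalk_iter C (mem_W_onWalkAt C hd0 hh₀W) (n - 1)))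
            (by rw [← hcwdef, hcwy]; exact hh₀nE)
          rw [← hcwdef, hcwy] at this
          rw [hyeq]
          exact this
        exact dreach_trans C r1 (dreach_trans C r2 (dreach_trans C r3 r4))
  -- conclusion : the chord h₀ is parallel to a boundary edge
  have hu_i₂ : u = i₂ := hSuniq u (by omega) (by omega) (by rw [hxu]; exact (boundaryBrin_bwalk C hc₀).1)
  have hcstar_eq : cstar = M.opp ((⇑M.next)^[rs C c₀] c₀) := by
    rw [hcstardef, ← hu_i₂, hxu, bwalk_eq]
  have hsv1 : M.sameVertex ((⇑M.next)^[rs C c₀] c₀) h₀ := by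
    refine sameVertex_trans (sameVertex_symm (sameVertex_iter M c₀ (rs C c₀))) ?_
    rw [hh₀eq]
    exact sameVertex_iter M c₀ j₀
  have hsv2 : M.sameVertex (M.opp ((⇑M.next)^[rs C c₀] c₀)) (M.opp h₀) := by
    rw [← hcstar_eq]
    exact cornerExterior_sameVertex C hopext
  rcases hNM _ _ hsv1 hsv2 with heq | heq
  · exact hh₀nE (heq ▸ rs_mem C hc₀.1)
  · exact hh₀nE (heq ▸ ((es_opp_iff C _).2 (rs_mem C hc₀.1)))

/- ---------- Layer 10 : preservation of dual connectivity (add-edge steps) ---------- -/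

lemma mem_opp_image (K : Set D) (x : D) : x ∈ (⇑M.opp) '' K ↔ M.opp x ∈ K := by
  constructor
  · rintro ⟨y, hy, rfl⟩
    rwa [opp_opp]
  · intro h
    exact ⟨M.opp x, h, opp_opp M x⟩

lemma dreach_to_added (C C' : Subcomplex M) {h : D} (hFs : C'.Fs = C.Fs)
    (hEs : C'.Es = C.Es ∪ {h, M.opp h}) {a b : D}
    (hr : C.compDual.reachAvoiding {h, M.opp h} a b) :
    C'.compDual.reachAvoiding ∅ a b := by
  induction hr with
  | refl => exact Relation.ReflTransGen.refl
  | tail hxy hyz ih =>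
      refine Relation.ReflTransGen.tail ih ?_
      rcases hyz with ⟨h1, h2, h3⟩ | ⟨h1, h2, h3, h4⟩
      · exact Or.inl ⟨by rw [compDual_vs_iff, hFs]; exact h1,
          by rw [compDual_vs_iff, hFs]; exact h2, h3⟩
      · refine Or.inr ⟨?_, by simp, by simp, h4⟩
        rw [compDual_es_iff, hEs]
        intro hm
        rcases hm with hm | hm
        · exact h1 hm
        · rcases hm with hm | hm
          · exact h2 (by rw [hm]; left; rfl)
          · exact h2 (by rw [hm]; right; rfl)

lemma dualConn_split (C C' : Subcomplex M) {h : D} (hsp : C.SplitEdge h)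
    (hadd : IsAddEdge C h C') (hDC : DualConn C) : DualConn C' := by
  obtain ⟨hch, hnb, -⟩ := hsp
  have hforall : ∀ a ∈ C.compDual.Vs, ∀ b ∈ C.compDual.Vs,
      C.compDual.reachAvoiding {h, (dual M).opp h} a b := by
    by_contra hq
    exact hnb ⟨hch.1, hq⟩
  intro a ha b hb
  refine dreach_to_added C C' hadd.1 hadd.2.1 (hforall a ?_ b ?_)
  · rw [compDual_vs_iff, ← hadd.1]; exact ha
  · rw [compDual_vs_iff, ← hadd.1]; exact hb

lemma dualConn_merge (C C' : Subcomplex M) {h : D} (hmg : C.MergeEdge h)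
    (hadd : IsAddEdge C h C') (hDC : DualConn C) : DualConn C' := by
  obtain ⟨hch, d, d', hd, hhd, hd', hopd', hnsbf⟩ := hmg
  set cw : D → D := cwalk M C.Es with hcwdef
  have hcwinj : Function.Injective cw := cwalk_injective C
  have hhW : h ∈ forb cw d := ext_mem_cw C hd.1 hhd
  have hopnW : M.opp h ∉ forb cw d := by
    intro hmem
    obtain ⟨c, hc, hcb, hopc⟩ := mem_W_corner C hd hmem hch.2.1
    have : c = d' := corner_unique C hc.1 hd'.1 hopc hopd'
    exact hnsbf (Or.inl (this ▸ hcb))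
  -- build the detour around the boundary walk of d
  obtain ⟨n, hn0, hneq, hnmin⟩ := least_hit (f := cw) (x := h) (y := h)
    (exists_return hcwinj h)
  have hopforb : M.opp h ∉ forb cw h := by
    rw [← forb_eq hcwinj hhW]
    exact hopnW
  have hAv : ∀ i, 0 < i → i < n → cw^[i] h ≠ h ∧ cw^[i] h ≠ M.opp h := by
    intro i h1 h2
    exact ⟨hnmin i h1 h2, fun he => hopforb (he ▸ mem_forb cw h i)⟩
  have notinA : ∀ z, z ≠ h → z ≠ M.opp h →
      z ∉ ({h, M.opp h} : Set D) ∧ M.opp z ∉ ({h, M.opp h} : Set D) := by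
    intro z hz1 hz2
    constructor
    · intro hm; rcases hm with hm | hm
      · exact hz1 hm
      · exact hz2 hm
    · intro hm; rcases hm with hm | hm
      · apply hz2; rw [← hm, opp_opp]
      · exact hz1 (M.opp.injective hm)
  obtain ⟨j, hj0, hjlt, hjeq⟩ := hhd
  have hOnW : OnWalk C h := ⟨d, j, hd, hjlt, hjeq⟩
  have r1 : C.compDual.reachAvoiding {h, M.opp h} h (cw^[n - 1] h) := by
    refine walk_chain C _ hOnW (n - 1) ?_
    intro i h1 h2
    exact notinA _ (hAv i (by omega) (by omega)).1 (hAv i (by omega) (by omega)).2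
  have hcwy : cw (cw^[n - 1] h) = h := by
    have hstep : cw^[1 + (n - 1)] h = cw (cw^[n - 1] h) := by
      rw [Function.iterate_add_apply, Function.iterate_one]
    rw [← hstep, show 1 + (n - 1) = n by omega, hneq]
  have r2 : C.compDual.reachAvoiding {h, M.opp h} (cw^[n - 1] h) (M.opp h) := by
    have := hop_face C ({h, M.opp h} : Set D) (x := cw^[n - 1] h)
      (by
        have : OnWalk C (cw^[n - 1] h) := by
          have h1 := onWalk_cwalk_iter C hOnW (n - 1)
          rwa [← hcwdef] at h1
        exact this)
      (by rw [← hcwdef, hcwy]; exact hch.1)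
    rw [← hcwdef, hcwy] at this
    exact this
  have hdet := dreach_trans C r1 r2
  intro a ha b hb
  refine dreach_to_added C C' hadd.1 hadd.2.1 ?_
  refine dreach_detour C hdet (hDC a ?_ b ?_)
  · rw [← hadd.1]; exact ha
  · rw [← hadd.1]; exact hb

/- ---------- Layer 11 : preservation of dual connectivity under conquer ---------- -/

lemma forb_period3 (h3 : ∀ x : D, (⇑M.facePerm)^[3] x = x) (x : D) :
    forb (⇑M.facePerm) x = {x, M.facePerm x, M.facePerm (M.facePerm x)} := by
  ext y
  constructor
  · rintro ⟨n, rfl⟩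
    have hdecomp : (⇑M.facePerm)^[n] x = (⇑M.facePerm)^[n % 3] x := by
      conv_lhs => rw [show n = n % 3 + (n / 3) * 3 by omega, Function.iterate_add_apply,
        iterate_return_mul (h3 x) (n / 3)]
    rw [hdecomp]
    have hm : n % 3 = 0 ∨ n % 3 = 1 ∨ n % 3 = 2 := by omega
    rcases hm with hm | hm | hm <;> rw [hm]
    · left; rfl
    · right; left; rfl
    · right; right
      show M.facePerm (M.facePerm x) ∈ {M.facePerm (M.facePerm x)}
      rfl
  · intro hy
    rcases hy with rfl | rfl | hy
    · exact ⟨0, rfl⟩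
    · exact ⟨1, rfl⟩
    · rw [Set.mem_singleton_iff] at hy
      exact ⟨2, hy.symm⟩

lemma dualConn_conquer (h3 : ∀ x : D, (⇑M.facePerm)^[3] x = x) (hNL : M.NoLoops)
    (hNM : M.NoMultipleEdges) (C C' : Subcomplex M) {d : D} (hcq : IsConquer C d C')
    (hDC : DualConn C) : DualConn C' := by
  classical
  obtain ⟨⟨hdB, hfree⟩, hFs', hEs', -⟩ := hcq
  set k : ℕ := rs C d with hkdef
  have hk1 : 1 ≤ k := rs_pos C hdB.1
  set K : Set D := C.cornerFaceDarts d with hKdef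
  set g : ℕ → D := fun j => (⇑M.next)^[j] d with hgdef
  set w : ℕ → D := fun j => M.facePerm (M.facePerm (g j)) with hwdef
  have hKmem : ∀ x, x ∈ K ↔ ∃ j, j < k ∧ x ∈ forb (⇑M.facePerm) (g j) := fun x => Iff.rfl
  have hg0 : g 0 = d := rfl
  have hgEs : g k ∈ C.Es := rs_mem C hdB.1
  have hPinj : Function.Injective (⇑M.facePerm) := M.facePerm.injective
  have hP3 : ∀ x : D, M.facePerm (M.facePerm (M.facePerm x)) = x := fun x => h3 x
  have hPg : ∀ j, M.facePerm (g j) = M.opp (g (j + 1)) := by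
    intro j
    rw [facePerm_apply]
    congr 1
    exact (Function.iterate_succ_apply' (⇑M.next) j d).symm
  have hPw : ∀ j, M.facePerm (w j) = g j := fun j => hP3 (g j)
  have hnxw : ∀ j, M.next (w j) = M.opp (g j) := by
    intro j
    have h1 := hPw j
    rw [facePerm_apply] at h1
    rw [← opp_opp M (M.next (w j)), h1]
  have hopw : ∀ j, M.opp (w j) = M.next (M.opp (g (j + 1))) := by
    intro j
    have h1 : w j = M.facePerm (M.opp (g (j + 1))) := by
      rw [← hPg j]
    rw [h1, facePerm_apply, opp_opp]
  have hgK : ∀ j, j < k → g j ∈ K := fun j hj => (hKmem _).2 ⟨j, hj, forb_self _ _⟩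
  have hbK : ∀ j, j < k → M.opp (g (j + 1)) ∈ K := fun j hj =>
    (hKmem _).2 ⟨j, hj, ⟨1, by simp only [Function.iterate_one]; exact hPg j⟩⟩
  have hwKm : ∀ j, j < k → w j ∈ K := fun j hj =>
    (hKmem _).2 ⟨j, hj, ⟨2, rfl⟩⟩
  have hK_orbit : ∀ x y, y ∈ forb (⇑M.facePerm) x → (x ∈ K ↔ y ∈ K) := by
    intro x y hxy
    constructor
    · rintro ⟨j, hj, hx⟩
      exact ⟨j, hj, forb_trans hx hxy⟩
    · rintro ⟨j, hj, hy⟩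
      exact ⟨j, hj, forb_trans hy (forb_symm hPinj hxy)⟩
  have hK3 : ∀ x, x ∈ K → ∃ j, j < k ∧ (x = g j ∨ x = M.opp (g (j + 1)) ∨ x = w j) := by
    rintro x ⟨j, hj, hx⟩
    rw [forb_period3 h3] at hx
    rcases hx with hx | hx | hx
    · exact ⟨j, hj, Or.inl hx⟩
    · exact ⟨j, hj, Or.inr (Or.inl (by rw [hx, hPg]))⟩
    · rw [Set.mem_singleton_iff] at hx
      exact ⟨j, hj, Or.inr (Or.inr hx)⟩
  have hgnotEs : ∀ j, 0 < j → j < k → g j ∉ C.Es := fun j h1 h2 => rs_min C j h1 h2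
  have hgext : ∀ j, 0 < j → j < k → g j ∈ C.cornerExterior d := fun j h1 h2 => ⟨j, h1, h2, rfl⟩
  have hapexEs : ∀ m, 1 ≤ m → m < k → ∀ y, M.sameVertex (M.opp (g m)) y → y ∉ C.Es := by
    intro m hm1 hm2 y hsv hyE
    have hgmE : g m ∉ C.Es := hgnotEs m hm1 hm2
    have hopgmE : M.opp (g m) ∉ C.Es := fun hc => hgmE ((es_opp_iff C _).1 hc)
    obtain ⟨c, hcB, hcx⟩ := exterior_mem_corner C hyE (sameVertex_symm hsv) hopgmE
    exact hfree (g m) (hgext m hm1 hm2) ⟨hgmE, hopgmE, ⟨d, hdB, hgext m hm1 hm2⟩, ⟨c, hcB, hcx⟩⟩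
  have hL2 : ∀ i j, 1 ≤ i → i < k → 1 ≤ j → j < k →
      M.sameVertex (M.opp (g i)) (M.opp (g j)) → i = j := by
    intro i j hi1 hi2 hj1 hj2 hsv
    have hgij : M.sameVertex (g i) (g j) :=
      sameVertex_trans (sameVertex_symm (sameVertex_iter M d i)) (sameVertex_iter M d j)
    rcases hNM (g i) (g j) hgij hsv with he | he
    · rcases le_total i j with hle | hle
      · have := iterate_cancel M.next.injective hle (he.symm : (⇑M.next)^[i] d = (⇑M.next)^[j] d)
        by_contra hne
        exact rs_min C (j - i) (by omega) (by omega) (this ▸ hdB.1)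
      · have := iterate_cancel M.next.injective hle (he : (⇑M.next)^[j] d = (⇑M.next)^[i] d)
        by_contra hne
        exact rs_min C (i - j) (by omega) (by omega) (this ▸ hdB.1)
    · exfalso
      apply hNL (g i)
      rw [← he]
      exact hgij
  have hsv_wg : ∀ j, M.sameVertex (w j) (M.opp (g j)) := fun j =>
    ⟨1, by simp only [Function.iterate_one]; exact hnxw j⟩
  have hsv_opwj : ∀ j, M.sameVertex (M.opp (g (j + 1))) (M.opp (w j)) := fun j =>
    ⟨1, by simp only [Function.iterate_one]; exact (hopw j).symm⟩
  have hdvx : ∀ j, M.sameVertex d (g j) := fun j => sameVertex_iter M d j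
  -- characterization of the darts of C' at an apex vertex
  have hCharEs : ∀ m, 1 ≤ m → m < k → ∀ x, M.sameVertex (M.opp (g m)) x → x ∈ C'.Es →
      x = M.opp (g m) ∨ x = w m ∨ x = M.opp (w (m - 1)) := by
    intro m hm1 hm2 x hsv hxE
    rw [hEs'] at hxE
    rcases hxE with hxE | hxOp
    · rcases hxE with hxE | hxK
      · exact absurd hxE (hapexEs m hm1 hm2 x hsv)
      · obtain ⟨j, hj, hform⟩ := hK3 x hxK
        rcases hform with rfl | rfl | rfl
        · exfalso
          have hsv1 : M.sameVertex (M.opp (g m)) d :=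
            sameVertex_trans hsv (sameVertex_symm (hdvx j))
          exact hapexEs m hm1 hm2 d hsv1 hdB.1
        · rcases Nat.lt_or_ge (j + 1) k with hlt | hge
          · have := hL2 m (j + 1) hm1 hm2 (by omega) hlt hsv
            left; rw [← this]
          · exfalso
            apply hapexEs m hm1 hm2 _ hsv
            rw [show j + 1 = k by omega, es_opp_iff]
            exact hgEs
        · have hsv2 : M.sameVertex (M.opp (g m)) (M.opp (g j)) :=
            sameVertex_trans hsv (hsv_wg j)
          rcases Nat.eq_zero_or_pos j with h0 | h0
          · exfalso
            apply hapexEs m hm1 hm2 _ hsv2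
            rw [h0, hg0, es_opp_iff]
            exact hdB.1
          · have := hL2 m j hm1 hm2 h0 hj hsv2
            right; left; rw [← this]
    · rw [mem_opp_image] at hxOp
      obtain ⟨j, hj, hform⟩ := hK3 _ hxOp
      have hxeq : x = M.opp (M.opp x) := (opp_opp M x).symm
      rcases hform with he | he | he
      · have hx2 : x = M.opp (g j) := by rw [hxeq, he]
        rcases Nat.eq_zero_or_pos j with h0 | h0
        · exfalso
          apply hapexEs m hm1 hm2 x hsv
          rw [hx2, h0, hg0, es_opp_iff]
          exact hdB.1
        · have hsv2 : M.sameVertex (M.opp (g m)) (M.opp (g j)) := by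
            rw [← hx2]; exact hsv
          have := hL2 m j hm1 hm2 h0 hj hsv2
          left; rw [hx2, ← this]
      · have hx2 : x = g (j + 1) := by rw [hxeq, he, opp_opp]
        exfalso
        have hsv1 : M.sameVertex (M.opp (g m)) d :=
          sameVertex_trans hsv (by rw [hx2]; exact sameVertex_symm (hdvx (j + 1)))
        exact hapexEs m hm1 hm2 d hsv1 hdB.1
      · have hx2 : x = M.opp (w j) := by rw [hxeq, he]
        have hsv2 : M.sameVertex (M.opp (g m)) (M.opp (g (j + 1))) :=
          sameVertex_trans hsv (by rw [hx2]; exact sameVertex_symm (hsv_opwj j))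
        rcases Nat.lt_or_ge (j + 1) k with hlt | hge
        · have hjm := hL2 m (j + 1) hm1 hm2 (by omega) hlt hsv2
          right; right
          rw [hx2, show j = m - 1 by omega]
        · exfalso
          apply hapexEs m hm1 hm2 _ hsv2
          rw [show j + 1 = k by omega, es_opp_iff]
          exact hgEs
  -- no wrapped fan unless there is no exit at all
  have hno_wrap : (∃ j₀, j₀ < k ∧ M.opp (w j₀) ∉ K) → ∀ j, j < k → M.opp (w j) ∉ K := by
    rintro ⟨j₀, hj₀, hj₀K⟩ j hj hwjK
    have hwrapfin : k = 2 → M.opp (w 0) = w 1 → False := by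
      intro hk2 hw01
      have hj₀2 : j₀ = 0 ∨ j₀ = 1 := by omega
      rcases hj₀2 with rfl | rfl
      · exact hj₀K (hw01 ▸ hwKm 1 (by omega))
      · apply hj₀K
        have : M.opp (w 1) = w 0 := by rw [← hw01, opp_opp]
        rw [this]
        exact hwKm 0 (by omega)
    obtain ⟨i, hi, hform⟩ := hK3 _ hwjK
    rcases hform with he | he | he
    · -- op (w j) = g i
      have hsv1 : M.sameVertex (M.opp (g (j + 1))) d :=
        sameVertex_trans (hsv_opwj j) (by rw [he]; exact sameVertex_symm (hdvx i))
      rcases Nat.lt_or_ge (j + 1) k with hlt | hge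
      · exact hapexEs (j + 1) (by omega) hlt d hsv1 hdB.1
      · apply hNL (g k)
        refine sameVertex_trans (sameVertex_symm (hdvx k)) ?_
        rw [show j + 1 = k by omega] at hsv1
        exact sameVertex_symm hsv1
    · -- op (w j) = op (g (i+1)) : w j = g (i+1)
      have hwj_eq : w j = g (i + 1) := M.opp.injective he
      have hsv1 : M.sameVertex d (M.opp (g j)) :=
        sameVertex_trans (by rw [hwj_eq]; exact hdvx (i + 1)) (hsv_wg j)
      rcases Nat.eq_zero_or_pos j with h0 | h0
      · apply hNL d
        rw [h0, hg0] at hsv1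
        exact hsv1
      · exact hapexEs j h0 hj d (sameVertex_symm hsv1) hdB.1
    · -- op (w j) = w i
      have hsv1 : M.sameVertex (M.opp (g (j + 1))) (M.opp (g i)) :=
        sameVertex_trans (hsv_opwj j) (by rw [he]; exact hsv_wg i)
      rcases Nat.lt_or_ge (j + 1) k with hlt | hge
      · rcases Nat.eq_zero_or_pos i with h0 | h0
        · apply hapexEs (j + 1) (by omega) hlt _ hsv1
          rw [h0, hg0, es_opp_iff]
          exact hdB.1
        · have hij := hL2 (j + 1) i (by omega) hlt h0 hi hsv1
          -- op (w j) = w (j+1) : look at the mirror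
          have hmir : M.opp (w (j + 1)) = w j := by
            rw [hij, ← he, opp_opp]
          have hsv2 : M.sameVertex (M.opp (g (j + 2))) (M.opp (g j)) :=
            sameVertex_trans (hsv_opwj (j + 1)) (by rw [hmir]; exact hsv_wg j)
          rcases Nat.eq_zero_or_pos j with hj0 | hj0
          · rcases Nat.lt_trichotomy (j + 2) k with h2 | h2 | h2
            · apply hapexEs (j + 2) (by omega) h2 _ hsv2
              rw [hj0, hg0, es_opp_iff]
              exact hdB.1
            · -- k = 2 and the fan is fully wrapped
              apply hwrapfin (by omega)
              rw [← hj0, he, ← hij, hj0]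
            · omega
          · rcases Nat.lt_trichotomy (j + 2) k with h2 | h2 | h2
            · have := hL2 (j + 2) j (by omega) h2 hj0 hj hsv2
              omega
            · apply hapexEs j hj0 hj _ (sameVertex_symm hsv2)
              rw [show j + 2 = k by omega, es_opp_iff]
              exact hgEs
            · omega
      · -- j + 1 = k
        rcases Nat.eq_zero_or_pos i with h0 | h0
        · -- op (w (k-1)) = w 0 : mirror around
          rcases Nat.lt_or_ge k 2 with hk2 | hk2
          · -- k = 1 : w 0 would be its own opposite
            apply M.opp_ne (w j)
            rw [he]
            congr 1
            omega
          · have hmir : M.opp (w 0) = w j := by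
              rw [← h0, ← he, opp_opp]
            have hsv2 : M.sameVertex (M.opp (g 1)) (M.opp (g j)) :=
              sameVertex_trans (hsv_opwj 0) (by rw [hmir]; exact hsv_wg j)
            rcases Nat.lt_trichotomy 1 j with h2 | h2 | h2
            · have := hL2 1 j (by omega) (by omega) (by omega) hj hsv2
              omega
            · -- j = 1, k = 2 : the wrapped fan
              apply hwrapfin (by omega)
              rw [hmir, h2]
            · omega
        · apply hapexEs i h0 hi _ (sameVertex_symm hsv1)
          rw [show j + 1 = k by omega, es_opp_iff]
          exact hgEs
  -- the chain of faces around an apex vertex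
  have hapex_step : ∀ m, 1 ≤ m → m < k → M.opp (w (m - 1)) ∉ K → M.opp (w m) ∉ K →
      C'.compDual.reachAvoiding ∅ (M.opp (w (m - 1))) (M.opp (w m)) := by
    intro m hm1 hm2 hwm1 hwm
    set z₀ : D := M.opp (g m) with hz₀def
    obtain ⟨s, hs0, hseq, hsmin⟩ := least_hit (f := ⇑M.next) (x := z₀) (y := z₀)
      (exists_return M.next.injective z₀)
    have hx1 : (⇑M.next)^[1] z₀ = M.opp (w (m - 1)) := by
      simp only [Function.iterate_one]
      rw [hopw (m - 1), show m - 1 + 1 = m by omega]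
    have hxs1 : (⇑M.next)^[s - 1] z₀ = w m := by
      apply M.next.injective
      rw [hnxw m]
      have hstep : M.next ((⇑M.next)^[s - 1] z₀) = (⇑M.next)^[s] z₀ := by
        rw [← Function.iterate_succ_apply' (⇑M.next) (s - 1) z₀]
        congr 1
        omega
      rw [hstep, hseq]
    have hs3 : 3 ≤ s := by
      by_contra hcon
      have hs12 : s = 1 ∨ s = 2 := by omega
      rcases hs12 with hs | hs
      · apply hwm
        have hwz : w m = z₀ := by rw [← hxs1, hs]; rfl
        rw [hwz, hz₀def, opp_opp]
        exact hgK m hm2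
      · apply hwm
        have hwz : w m = M.opp (w (m - 1)) := by rw [← hxs1, hs, ← hx1]
        rw [hwz, opp_opp]
        exact hwKm (m - 1) (by omega)
    have hsvz : ∀ q, M.sameVertex z₀ ((⇑M.next)^[q] z₀) := fun q => sameVertex_iter M z₀ q
    have hwm1Es : M.opp (w (m - 1)) ∉ C.Es := by
      apply hapexEs m hm1 hm2
      rw [← hx1]
      exact hsvz 1
    have hwmEs : w m ∉ C.Es := by
      apply hapexEs m hm1 hm2
      rw [← hxs1]
      exact hsvz (s - 1)
    have hzfs : M.opp (w (m - 1)) ∉ C'.Fs := by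
      rw [hFs']
      rintro (hf | hf)
      · exact hwm1Es (fs_sub_es C hf)
      · exact hwm1 hf
    have hext : ∀ q, 1 ≤ q → q ≤ s - 3 →
        (⇑M.next)^[q] (M.opp (w (m - 1))) ∉ C'.Es := by
      intro q h1 h2 hmem
      have hq1 : (⇑M.next)^[q] (M.opp (w (m - 1))) = (⇑M.next)^[q + 1] z₀ := by
        rw [← hx1, ← Function.iterate_add_apply]
      rw [hq1] at hmem
      rcases hCharEs m hm1 hm2 _ (hsvz (q + 1)) hmem with he | he | he
      · exact hsmin (q + 1) (by omega) (by omega) he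
      · rw [← hxs1] at he
        have := pos_inj M.next.injective hsmin (x := z₀) (by omega) (by omega) he
        omega
      · rw [← hx1] at he
        have := pos_inj M.next.injective hsmin (x := z₀) (by omega) (by omega) he
        omega
    have hchain := sector_chain C' ∅ (x := M.opp (w (m - 1))) hzfs (s - 3)
      (fun q h1 h2 => ⟨hext q h1 h2, Set.notMem_empty _, Set.notMem_empty _⟩)
    refine dreach_trans C' hchain ?_
    have hylast : (⇑M.next)^[s - 3] (M.opp (w (m - 1))) = (⇑M.next)^[s - 2] z₀ := by
      rw [← hx1, ← Function.iterate_add_apply]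
      congr 1
      omega
    have hnxy : M.next ((⇑M.next)^[s - 2] z₀) = w m := by
      rw [← hxs1, ← Function.iterate_succ_apply' (⇑M.next) (s - 2) z₀]
      congr 1
      omega
    have hyfs : (⇑M.next)^[s - 3] (M.opp (w (m - 1))) ∉ C'.Fs := by
      rcases Nat.eq_zero_or_pos (s - 3) with h0 | h0
      · rw [h0]; exact hzfs
      · intro hmem
        exact hext (s - 3) h0 le_rfl (C'.face_edges _ hmem)
    have hwmfs : M.opp (w m) ∉ C'.Fs := by
      rw [hFs']
      rintro (hf | hf)
      · exact hwmEs ((es_opp_iff C _).1 (fs_sub_es C hf))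
      · exact hwm hf
    refine dstep_face C' hyfs hwmfs ⟨1, ?_⟩
    simp only [Function.iterate_one]
    rw [facePerm_apply, hylast, hnxy]
  -- connecting the exterior faces of the fan
  have hochain : (∀ j, j < k → M.opp (w j) ∉ K) → ∀ j j', j < k → j' < k →
      C'.compDual.reachAvoiding ∅ (M.opp (w j)) (M.opp (w j')) := by
    intro hall
    have hfrom0 : ∀ j, j < k → C'.compDual.reachAvoiding ∅ (M.opp (w 0)) (M.opp (w j)) := by
      intro j
      induction j with
      | zero => intro _; exact Relation.ReflTransGen.refl
      | succ i ih =>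
          intro hik
          refine dreach_trans C' (ih (by omega)) ?_
          have := hapex_step (i + 1) (by omega) hik (hall i (by omega)) (hall (i + 1) hik)
          rwa [show i + 1 - 1 = i by omega] at this
    intro j j' hj hj'
    exact dreach_trans C' (dreach_symm C' (hfrom0 j hj)) (hfrom0 j' hj')
  -- exits of the fan
  have hexit_char : ∀ z, z ∈ K → z ∉ C.Es → M.opp z ∉ K → ∃ j, j < k ∧ z = w j := by
    intro z hzK hzE hzop
    obtain ⟨j, hj, hform⟩ := hK3 z hzK
    rcases hform with he | he | he
    · exfalso
      rcases Nat.eq_zero_or_pos j with h0 | h0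
      · rw [he, h0, hg0] at hzE
        exact hzE hdB.1
      · apply hzop
        rw [he]
        have := hbK (j - 1) (by omega)
        rwa [show j - 1 + 1 = j by omega] at this
    · exfalso
      rcases Nat.lt_or_ge (j + 1) k with hlt | hge
      · apply hzop
        rw [he, opp_opp]
        exact hgK (j + 1) hlt
      · apply hzE
        rw [he, show j + 1 = k by omega, es_opp_iff]
        exact hgEs
    · exact ⟨j, hj, he⟩
  -- the surgery induction
  intro a ha b hb
  rw [hFs'] at ha hb
  have haK : a ∉ K := fun h => ha (Or.inr h)
  have haF : a ∉ C.Fs := fun h => ha (Or.inl h)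
  have hbK2 : b ∉ K := fun h => hb (Or.inr h)
  have hbF : b ∉ C.Fs := fun h => hb (Or.inl h)
  set Inv : D → Prop := fun z =>
    (z ∉ K ∧ C'.compDual.reachAvoiding ∅ a z) ∨
    (z ∈ K ∧ ∃ j, j < k ∧ M.opp (w j) ∉ K ∧
      C'.compDual.reachAvoiding ∅ a (M.opp (w j))) with hInvdef
  have hstep_inv : ∀ x y,
      ((x ∈ C.compDual.Vs ∧ y ∈ C.compDual.Vs ∧ (dual M).sameVertex x y) ∨
        (x ∈ C.compDual.Es ∧ x ∉ (∅ : Set D) ∧ (dual M).opp x ∉ (∅ : Set D) ∧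
          y = (dual M).opp x)) → Inv x → Inv y := by
    intro x y hr hInvx
    rcases hr with ⟨h1, h2, h3⟩ | ⟨h1, -, -, h4⟩
    · -- same face step
      have hKiff := hK_orbit x y h3
      rcases hInvx with ⟨hxK, hrch⟩ | ⟨hxK, hw⟩
      · left
        refine ⟨fun hyK => hxK (hKiff.2 hyK), dreach_trans C' hrch ?_⟩
        refine dstep_face C' ?_ ?_ h3
        · rw [hFs']
          rintro (hf | hf)
          · exact h1 hf
          · exact hxK hf
        · rw [hFs']
          rintro (hf | hf)
          · exact h2 hf
          · exact hxK (hKiff.2 hf)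
      · right
        exact ⟨hKiff.1 hxK, hw⟩
    · -- edge crossing step
      have h1' : x ∉ C.Es := h1
      have h4' : y = M.opp x := h4
      subst h4'
      rcases hInvx with ⟨hxK, hrch⟩ | ⟨hxK, j, hj, hjK, hrch⟩
      · by_cases hoxK : M.opp x ∈ K
        · -- entering the fan
          right
          refine ⟨hoxK, ?_⟩
          obtain ⟨j, hj, hwj⟩ := hexit_char (M.opp x) hoxK
            (fun hc => h1' ((es_opp_iff C x).1 hc)) (by rwa [opp_opp])
          refine ⟨j, hj, ?_, ?_⟩
          · rw [← hwj, opp_opp]; exact hxK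
          · rw [← hwj, opp_opp]; exact hrch
        · left
          refine ⟨hoxK, dreach_trans C' hrch ?_⟩
          refine dstep_cross C' ?_ (Set.notMem_empty _) (Set.notMem_empty _)
          rw [hEs']
          rintro ((hf | hf) | hf)
          · exact h1' hf
          · exact hxK hf
          · exact hoxK ((mem_opp_image K x).1 hf)
      · by_cases hoxK : M.opp x ∈ K
        · right
          exact ⟨hoxK, j, hj, hjK, hrch⟩
        · -- leaving the fan
          obtain ⟨j', hj', hwj'⟩ := hexit_char x hxK h1' hoxK
          have hall := hno_wrap ⟨j', hj', by rw [← hwj']; exact hoxK⟩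
          left
          refine ⟨hoxK, dreach_trans C' hrch ?_⟩
          rw [hwj']
          exact hochain hall j j' hj hj'
  have hfold : ∀ z, C.compDual.reachAvoiding ∅ a z → Inv z := by
    intro z hz
    induction hz with
    | refl => exact Or.inl ⟨haK, Relation.ReflTransGen.refl⟩
    | tail hxy hstep ih => exact hstep_inv _ _ hstep ih
  rcases hfold b (hDC a haF b hbF) with ⟨-, hr⟩ | ⟨hbKmem, -⟩
  · exact hr
  · exact absurd hbKmem hbK2

/- ---------- Layer 12 : dual connectivity of the root complex ---------- -/

lemma dualConn_root (h3 : ∀ x : D, (⇑M.facePerm)^[3] x = x) (hNL : M.NoLoops)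
    (hconn : M.Connected) {r : D} (C0 : Subcomplex M) (hroot : IsRootComplex M r C0) :
    DualConn C0 := by
  classical
  set R : Set D := rootDarts M r with hRdef
  have hFs0 : C0.Fs = R := hroot.1
  have hEs0 : C0.Es = R ∪ (⇑M.opp) '' R := hroot.2.1
  have hEsmem : ∀ x, x ∈ C0.Es ↔ x ∈ R ∨ M.opp x ∈ R := by
    intro x
    rw [hEs0]
    constructor
    · rintro (hx | hx)
      · exact Or.inl hx
      · exact Or.inr ((mem_opp_image R x).1 hx)
    · rintro (hx | hx)
      · exact Or.inl hx
      · exact Or.inr ((mem_opp_image R x).2 hx)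
  have hP3 : ∀ x : D, M.facePerm (M.facePerm (M.facePerm x)) = x := fun x => h3 x
  have hopP : ∀ x : D, M.opp (M.facePerm x) = M.next x := by
    intro x
    rw [facePerm_apply, opp_opp]
  have no_deg1 : ∀ x : D, M.next x ≠ x := by
    intro x hx
    have hPx : M.facePerm x = M.opp x := by rw [facePerm_apply, hx]
    have hPy : M.facePerm (M.facePerm (M.facePerm x)) = x := hP3 x
    have hnxy : M.next (M.facePerm (M.facePerm x)) = M.opp x := by
      rw [← hopP (M.facePerm (M.facePerm x)), hPy]
    have hnxopx : M.next (M.opp x) = M.opp (M.facePerm (M.facePerm x)) := by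
      have h2 : M.facePerm (M.opp x) = M.facePerm (M.facePerm x) := by rw [← hPx]
      rw [← hopP (M.opp x), h2]
    apply hNL (M.facePerm (M.facePerm x))
    refine ⟨2, ?_⟩
    show M.next (M.next (M.facePerm (M.facePerm x))) = M.opp (M.facePerm (M.facePerm x))
    rw [hnxy, hnxopx]
  have hRP : ∀ x ∈ R, M.facePerm x ∈ R := by
    rintro x hx
    exact forb_trans hx ⟨1, rfl⟩
  have hRPinv : ∀ x ∈ R, M.facePerm (M.facePerm x) ∈ R ∧
      M.facePerm (M.facePerm (M.facePerm x)) = x := by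
    intro x hx
    exact ⟨hRP _ (hRP _ hx), hP3 x⟩
  -- no two root darts share a vertex
  have hnoPvert : ∀ x : D, ¬ M.sameVertex x (M.facePerm x) := by
    intro x hsv
    apply hNL (M.next x)
    refine sameVertex_trans (sameVertex_symm ⟨1, rfl⟩) ?_
    rw [facePerm_apply] at hsv
    exact hsv
  have hRuniq : ∀ a b, a ∈ R → b ∈ R → M.sameVertex a b → a = b := by
    have hmem3 : ∀ a, a ∈ R →
        a = r ∨ a = M.facePerm r ∨ a = M.facePerm (M.facePerm r) := by
      intro a ha
      rw [hRdef] at ha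
      unfold rootDarts at ha
      rw [forb_period3 h3] at ha
      rcases ha with ha | ha | ha
      · exact Or.inl ha
      · exact Or.inr (Or.inl ha)
      · exact Or.inr (Or.inr (Set.mem_singleton_iff.1 ha))
    intro a b ha hb hsv
    have hPr : M.facePerm (M.facePerm (M.facePerm r)) = r := hP3 r
    rcases hmem3 a ha with h1 | h1 | h1 <;> rcases hmem3 b hb with h2 | h2 | h2 <;>
      rw [h1, h2] at hsv ⊢
    · exact absurd hsv (hnoPvert r)
    · exfalso
      apply hnoPvert (M.facePerm (M.facePerm r))
      rw [hPr]
      exact sameVertex_symm hsv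
    · exact absurd (sameVertex_symm hsv) (hnoPvert r)
    · exact absurd hsv (hnoPvert (M.facePerm r))
    · exfalso
      apply hnoPvert (M.facePerm (M.facePerm r))
      rw [hPr]
      exact hsv
    · exact absurd (sameVertex_symm hsv) (hnoPvert (M.facePerm r))
  have hnxR : ∀ z ∈ R, M.next z ∉ R := by
    intro z hz hmem
    exact no_deg1 z (hRuniq _ _ hmem hz (sameVertex_symm ⟨1, rfl⟩))
  have hopR : ∀ z ∈ R, M.opp z ∉ R := by
    intro z hz hmem
    obtain ⟨hz2, hz3⟩ := hRPinv z hz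
    have hzeq : M.opp z = M.next (M.facePerm (M.facePerm z)) := by
      rw [← hopP (M.facePerm (M.facePerm z)), hz3]
    rw [hzeq] at hmem
    exact hnxR _ hz2 hmem
  have hcross_auto : ∀ x, x ∉ R → M.next x ∉ R → M.opp (M.next x) ∉ R := by
    intro x hx hnx hmem
    obtain ⟨hz2, hz3⟩ := hRPinv _ hmem
    have : M.next (M.facePerm (M.facePerm (M.opp (M.next x)))) = M.next x := by
      rw [← hopP (M.facePerm (M.facePerm (M.opp (M.next x)))), hz3, opp_opp]
    have hxeq : M.facePerm (M.facePerm (M.opp (M.next x))) = x := M.next.injective this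
    rw [hxeq] at hz2
    exact hx hz2
  have rot_step : ∀ x, x ∉ R → M.next x ∉ R → C0.compDual.reachAvoiding ∅ x (M.next x) := by
    intro x hx hnx
    have hopnx := hcross_auto x hx hnx
    have hstep1 : C0.compDual.reachAvoiding ∅ x (M.opp (M.next x)) := by
      refine dstep_face C0 (by rw [hFs0]; exact hx) (by rw [hFs0]; exact hopnx) ⟨1, ?_⟩
      simp only [Function.iterate_one]
      rw [facePerm_apply]
    refine dreach_trans C0 hstep1 ?_
    have hstep2 := dstep_cross C0 (A := (∅ : Set D)) (x := M.opp (M.next x))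
      (by rw [hEsmem]; rintro (hm | hm); exact hopnx hm; rw [opp_opp] at hm; exact hnx hm)
      (Set.notMem_empty _) (Set.notMem_empty _)
    rw [opp_opp] at hstep2
    exact hstep2
  have rot_run : ∀ x n, (∀ i, i ≤ n → (⇑M.next)^[i] x ∉ R) →
      C0.compDual.reachAvoiding ∅ x ((⇑M.next)^[n] x) := by
    intro x n hall
    induction n with
    | zero => exact Relation.ReflTransGen.refl
    | succ i ih =>
        refine dreach_trans C0 (ih (fun q hq => hall q (by omega))) ?_
        rw [Function.iterate_succ_apply']
        exact rot_step _ (hall i (by omega))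
          (by rw [← Function.iterate_succ_apply' (⇑M.next) i x]; exact hall (i + 1) le_rfl)
  have hROT : ∀ x y, M.sameVertex x y → x ∉ R → y ∉ R →
      C0.compDual.reachAvoiding ∅ x y := by
    intro x y hsv hx hy
    obtain ⟨p, hp0, hpeq, hpmin⟩ := least_hit (f := ⇑M.next) (x := x) (y := x)
      (exists_return M.next.injective x)
    obtain ⟨m, hmp, hmeq⟩ := pos_lt_period M.next.injective hp0 hpeq hsv
    by_cases hex : ∃ i, i < p ∧ (⇑M.next)^[i] x ∈ R
    · obtain ⟨i₀, hi₀p, hi₀R⟩ := hex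
      have huniq : ∀ i, i < p → (⇑M.next)^[i] x ∈ R → i = i₀ := by
        intro i hip hiR
        have := hRuniq _ _ hiR hi₀R
          (sameVertex_trans (sameVertex_symm (sameVertex_iter M x i)) (sameVertex_iter M x i₀))
        exact pos_inj M.next.injective hpmin hip hi₀p this
      have hi₀0 : i₀ ≠ 0 := fun h => hx (by rw [h] at hi₀R; exact hi₀R)
      have hi₀m : i₀ ≠ m := fun h => hy (by rw [← hmeq, ← h]; exact hi₀R)
      rcases Nat.lt_or_ge m i₀ with hmi | hmi
      · rw [← hmeq]
        refine rot_run x m ?_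
        intro i hi hiR
        have := huniq i (by omega) hiR
        omega
      · refine dreach_symm C0 ?_
        have hrun := rot_run y (p - m) ?_
        · have hyx : (⇑M.next)^[p - m] y = x := by
            rw [← hmeq, ← Function.iterate_add_apply, show p - m + m = p by omega, hpeq]
          rwa [hyx] at hrun
        · intro i hi hiR
          have hiy : (⇑M.next)^[i] y = (⇑M.next)^[i + m] x := by
            rw [← hmeq, ← Function.iterate_add_apply]
          rw [hiy] at hiR
          rcases Nat.lt_or_ge (i + m) p with hlt | hge
          · have := huniq (i + m) hlt hiR
            omega
          · have hieq : i + m = p := by omega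
            rw [hieq, hpeq] at hiR
            exact hx hiR
    · push_neg at hex
      rw [← hmeq]
      refine rot_run x m ?_
      intro i hi hiR
      rcases Nat.lt_or_ge i p with hlt | hge
      · exact hex i hlt hiR
      · have : i = m := by omega
        subst this
        rw [hmeq] at hiR
        exact hy hiR
  have hop_root : ∀ z, z ∈ R → C0.compDual.reachAvoiding ∅ (M.next z) (M.opp z) := by
    intro z hz
    set q : D := M.next.symm z with hq
    have hnxq : M.next q = z := M.next.apply_symm_apply z
    have hPq : M.facePerm q = M.opp z := by rw [facePerm_apply, hnxq]
    have hqR : q ∉ R := by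
      intro hmem
      have : q = z := hRuniq _ _ hmem hz ⟨1, hnxq⟩
      rw [← this] at hnxq
      exact no_deg1 q hnxq
    have hsv : M.sameVertex (M.next z) q := by
      refine sameVertex_trans (sameVertex_symm ⟨1, rfl⟩) ?_
      exact sameVertex_symm ⟨1, hnxq⟩
    refine dreach_trans C0 (hROT _ _ hsv (hnxR z hz) hqR) ?_
    exact dstep_face C0 (by rw [hFs0]; exact hqR) (by rw [hFs0]; exact hopR z hz) ⟨1, by
      simp only [Function.iterate_one]; exact hPq⟩
  -- the transfer
  set f : D → D := fun x => if x ∈ R then M.next x else x with hfdef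
  have hfR : ∀ x, f x ∉ R := by
    intro x
    by_cases hx : x ∈ R
    · simp only [hfdef, if_pos hx]
      exact hnxR x hx
    · simp only [hfdef, if_neg hx]
      exact hx
  have htrans : ∀ x y, (y = M.next x ∨ y = M.opp x) →
      C0.compDual.reachAvoiding ∅ (f x) (f y) := by
    intro x y hstep
    rcases hstep with rfl | rfl
    · by_cases hx : x ∈ R
      · have hy : M.next x ∉ R := hnxR x hx
        simp only [hfdef, if_pos hx, if_neg hy]
        exact Relation.ReflTransGen.refl
      · by_cases hy : M.next x ∈ R
        · simp only [hfdef, if_neg hx, if_pos hy]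
          refine hROT _ _ ?_ hx (hnxR _ hy)
          exact sameVertex_trans (sameVertex_iter M x 1) (sameVertex_iter M (M.next x) 1)
        · simp only [hfdef, if_neg hx, if_neg hy]
          exact hROT _ _ ⟨1, rfl⟩ hx hy
    · by_cases hx : x ∈ R
      · have hy : M.opp x ∉ R := hopR x hx
        simp only [hfdef, if_pos hx, if_neg hy]
        exact hop_root x hx
      · by_cases hy : M.opp x ∈ R
        · simp only [hfdef, if_neg hx, if_pos hy]
          have := dreach_symm C0 (hop_root _ hy)
          rwa [opp_opp] at this
        · simp only [hfdef, if_neg hx, if_neg hy]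
          refine dstep_cross C0 ?_ (Set.notMem_empty _) (Set.notMem_empty _)
          rw [hEsmem]
          rintro (hm | hm)
          · exact hx hm
          · exact hy hm
  intro a ha b hb
  rw [hFs0] at ha hb
  have hfold : ∀ z, Relation.ReflTransGen (fun u v => v = M.next u ∨ v = M.opp u) a z →
      C0.compDual.reachAvoiding ∅ (f a) (f z) := by
    intro z hz
    induction hz with
    | refl => exact Relation.ReflTransGen.refl
    | tail hxy hstep ih => exact dreach_trans C0 ih (htrans _ _ hstep)
  have hres := hfold b (hconn a b)
  simp only [hfdef, if_neg ha, if_neg hb] at hres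
  exact hres

/- ---------- Layer 13 : assembly ---------- -/

lemma dualConn_execReach {g : ℕ} (hT : IsTriang M g) (r : D) (C : Subcomplex M)
    (hER : ExecReach M r C) : DualConn C := by
  obtain ⟨C0, hroot, hsteps⟩ := hER
  have h0 : DualConn C0 :=
    dualConn_root (fun x => (hT.deg3 x).1) hT.noLoops hT.conn C0 hroot
  clear hroot
  induction hsteps with
  | refl => exact h0
  | tail hab hbc ih =>
      rcases hbc with ⟨dd, hcq⟩ | ⟨h, hsm, hadd⟩
      · exact dualConn_conquer (fun x => (hT.deg3 x).1) hT.noLoops hT.noMult _ _ hcq ih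
      · rcases hsm with hs | hm
        · exact dualConn_split _ _ hs hadd ih
        · exact dualConn_merge _ _ hm hadd ih

end SchnyderAux

open CombMap in
theorem traversal_progress_and_termination
    {D : Type} [Fintype D] [DecidableEq D]
    (M : CombMap D) (g : ℕ) (hT : IsTriang M g) (r : D) :
    -- progress: an update-candidate incident to the boundary face of {v0,v1}
    (∀ C : Subcomplex M, ExecReach M r C → ¬ IsFull C →
      ∀ d0, RootBoundaryBrin M r C d0 →
        (∃ d, C.FreeCorner d ∧ C.SameBoundaryFace d0 d) ∨
        (∃ h, (C.SplitEdge h ∨ C.MergeEdge h) ∧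
          ∃ d, C.BoundaryBrin d ∧ C.SameBoundaryFace d0 d ∧
            (h ∈ C.cornerExterior d ∨ M.opp h ∈ C.cornerExterior d))) ∧
    -- termination
    (¬ ∃ f : ℕ → Subcomplex M, IsRootComplex M r (f 0) ∧
        ∀ k : ℕ, PlainStep M (f k) (f (k + 1))) := by
  constructor
  · intro C hER _ d0 hd0
    exact SchnyderAux.progress_core C hT.noLoops hT.noMult
      (SchnyderAux.dualConn_execReach hT r C hER) hd0.1
  · exact SchnyderAux.no_infinite_run M r
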